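/- arXiv:1609.09447 — 11 statements merged into one kernel-verified Lean document; each statement's English description precedes it below -/
import Mathlib

section
/- Let H be a finite simple graph. If there exist a co-interval graph G and a graph homomorphism φ : G → H such that every edge of H is the image under φ of an edge of G, then H is itself a co-interval graph. -/
/-- A graph is an interval graph if its vertices can be assigned nonempty closed
intervals of `ℝ` so that distinct vertices are adjacent iff their intervals meet. -/
def IsIntervalGraph {V : Type*} (G : SimpleGraph V) : Prop :=
  ∃ I : V → Set ℝ,
    (∀ v, ∃ a b : ℝ, a ≤ b ∧ I v = Set.Icc a b) ∧
    ∀ u v : V, u ≠ v → (G.Adj u v ↔ (I u ∩ I v).Nonempty)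

/-- A co-interval graph is the complement of an interval graph. -/
def IsCoIntervalGraph {V : Type*} (G : SimpleGraph V) : Prop :=
  IsIntervalGraph Gᶜ

/-- If a finite graph `H` admits an edge-surjective graph homomorphism
from a co-interval graph, then `H` is itself a co-interval graph. -/
theorem stmt_1 {V : Type} [Fintype V] (H : SimpleGraph V)
    (h : ∃ (U : Type) (_ : Fintype U) (G : SimpleGraph U) (φ : G →g H),
      IsCoIntervalGraph G ∧
      ∀ u v : V, H.Adj u v → ∃ a b : U, G.Adj a b ∧ φ a = u ∧ φ b = v) :
    IsCoIntervalGraph H := by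
  classical
  obtain ⟨U, instU, G, φ, hG, hsurj⟩ := h
  haveI := instU
  obtain ⟨I, hIcc, hadj⟩ := hG
  choose l r hlr hI using hIcc
  -- if two vertices of G are non-adjacent, their intervals meet
  have meet : ∀ a b : U, ¬ G.Adj a b → l a ≤ r b ∧ l b ≤ r a := by
    intro a b hnadj
    rcases eq_or_ne a b with rfl | hne
    · exact ⟨hlr a, hlr a⟩
    · have : (I a ∩ I b).Nonempty := by
        rw [← hadj a b hne]
        exact ⟨hne, hnadj⟩
      rw [hI a, hI b, Set.Icc_inter_Icc, Set.nonempty_Icc, sup_le_iff, le_inf_iff,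
        le_inf_iff] at this
      exact ⟨this.1.2, this.2.1⟩
  -- adjacent vertices of G have disjoint intervals
  have disj : ∀ a b : U, G.Adj a b → r a < l b ∨ r b < l a := by
    intro a b hab
    have hne : a ≠ b := hab.ne
    have hnon : ¬ (I a ∩ I b).Nonempty := by
      rw [← hadj a b hne]
      intro hc
      exact hc.2 hab
    rw [hI a, hI b, Set.Icc_inter_Icc, Set.nonempty_Icc, sup_le_iff, le_inf_iff,
      le_inf_iff] at hnon
    by_contra hc
    push_neg at hc
    exact hnon ⟨⟨hlr a, hc.2⟩, hc.1, hlr b⟩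
  -- fibers of φ
  set S : V → Finset U := fun u => Finset.univ.filter (fun a => φ a = u) with hS
  have memS : ∀ {u : V} {a : U}, a ∈ S u ↔ φ a = u := by
    intro u a; simp [hS]
  -- within a fiber, intervals pairwise meet
  have fiber_meet : ∀ {u : V} {a b : U}, a ∈ S u → b ∈ S u → l a ≤ r b := by
    intro u a b ha hb
    rcases eq_or_ne a b with rfl | hne
    · exact hlr a
    · have hnadj : ¬ G.Adj a b := by
        intro hab
        have := φ.map_adj hab
        rw [memS.mp ha, memS.mp hb] at this
        exact H.irrefl this
      exact (meet a b hnadj).1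
  -- global bounds
  set C : ℝ := if hU : (Finset.univ : Finset U).Nonempty then Finset.univ.inf' hU l else 0
    with hC
  set D : ℝ := if hU : (Finset.univ : Finset U).Nonempty then Finset.univ.sup' hU r else 0
    with hD
  have hCl : ∀ a : U, C ≤ l a := by
    intro a
    have hU : (Finset.univ : Finset U).Nonempty := ⟨a, Finset.mem_univ a⟩
    rw [hC, dif_pos hU]
    exact Finset.inf'_le l (Finset.mem_univ a)
  have hrD : ∀ a : U, r a ≤ D := by
    intro a
    have hU : (Finset.univ : Finset U).Nonempty := ⟨a, Finset.mem_univ a⟩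
    rw [hD, dif_pos hU]
    exact Finset.le_sup' r (Finset.mem_univ a)
  have hCD : C ≤ D := by
    by_cases hU : (Finset.univ : Finset U).Nonempty
    · obtain ⟨a, _⟩ := hU
      exact le_trans (hCl a) (le_trans (hlr a) (hrD a))
    · rw [hC, hD, dif_neg hU, dif_neg hU]
  -- the intervals for H
  set L : V → ℝ := fun u => if h : (S u).Nonempty then (S u).sup' h l else C with hL
  set R : V → ℝ := fun u => if h : (S u).Nonempty then (S u).inf' h r else D with hR
  have hLR : ∀ u, L u ≤ R u := by
    intro u
    by_cases hu : (S u).Nonempty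
    · rw [hL, hR]
      simp only [dif_pos hu]
      apply Finset.sup'_le
      intro a ha
      apply Finset.le_inf'
      intro b hb
      exact fiber_meet ha hb
    · rw [hL, hR]; simp only [dif_neg hu]; exact hCD
  -- key equivalence
  have key : ∀ u v : V, u ≠ v → (H.Adj u v ↔ ¬ (L u ≤ R v ∧ L v ≤ R u)) := by
    intro u v huv
    constructor
    · rintro hadjH ⟨h1, h2⟩
      obtain ⟨a, b, hab, ha, hb⟩ := hsurj u v hadjH
      have hau : a ∈ S u := memS.mpr ha
      have hbv : b ∈ S v := memS.mpr hb
      have hu : (S u).Nonempty := ⟨a, hau⟩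
      have hv : (S v).Nonempty := ⟨b, hbv⟩
      have hRu : R u ≤ r a := by
        rw [hR]; simp only [dif_pos hu]
        exact Finset.inf'_le r hau
      have hRv : R v ≤ r b := by
        rw [hR]; simp only [dif_pos hv]
        exact Finset.inf'_le r hbv
      have hLu : l a ≤ L u := by
        rw [hL]; simp only [dif_pos hu]
        exact Finset.le_sup' l hau
      have hLv : l b ≤ L v := by
        rw [hL]; simp only [dif_pos hv]
        exact Finset.le_sup' l hbv
      rcases disj a b hab with hd | hd
      · exact absurd h2 (not_le.mpr (hRu.trans_lt (hd.trans_le hLv)))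
      · exact absurd h1 (not_le.mpr (hRv.trans_lt (hd.trans_le hLu)))
    · intro hn
      by_contra hnadj
      apply hn
      -- non-adjacent case: intervals meet
      have hcross : ∀ {a b : U}, a ∈ S u → b ∈ S v → l a ≤ r b := by
        intro a b ha hb
        have hne : a ≠ b := by
          intro hab; apply huv
          rw [← memS.mp ha, ← memS.mp hb, hab]
        have : ¬ G.Adj a b := by
          intro hg
          have := φ.map_adj hg
          rw [memS.mp ha, memS.mp hb] at this
          exact hnadj this
        exact (meet a b this).1
      constructor
      · by_cases hu : (S u).Nonempty
        · by_cases hv : (S v).Nonempty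
          · rw [hL, hR]; simp only [dif_pos hu, dif_pos hv]
            apply Finset.sup'_le; intro a ha
            apply Finset.le_inf'; intro b hb
            exact hcross ha hb
          · rw [hL, hR]; simp only [dif_pos hu, dif_neg hv]
            apply Finset.sup'_le; intro a ha
            exact le_trans (hlr a) (hrD a)
        · by_cases hv : (S v).Nonempty
          · rw [hL, hR]; simp only [dif_neg hu, dif_pos hv]
            apply Finset.le_inf'; intro b hb
            exact le_trans (hCl b) (hlr b)
          · rw [hL, hR]; simp only [dif_neg hu, dif_neg hv]; exact hCD
      · by_cases hv : (S v).Nonempty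
        · by_cases hu : (S u).Nonempty
          · rw [hL, hR]; simp only [dif_pos hu, dif_pos hv]
            apply Finset.sup'_le; intro b hb
            apply Finset.le_inf'; intro a ha
            have hne : b ≠ a := by
              intro hab; apply huv
              rw [← memS.mp ha, ← memS.mp hb, hab]
            have : ¬ G.Adj b a := by
              intro hg
              have := φ.map_adj hg
              rw [memS.mp ha, memS.mp hb] at this
              exact hnadj this.symm
            exact (meet b a this).1
          · rw [hL, hR]; simp only [dif_neg hu, dif_pos hv]
            apply Finset.sup'_le; intro b hb
            exact le_trans (hlr b) (hrD b)
        · by_cases hu : (S u).Nonempty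
          · rw [hL, hR]; simp only [dif_pos hu, dif_neg hv]
            apply Finset.le_inf'; intro a ha
            exact le_trans (hCl a) (hlr a)
          · rw [hL, hR]; simp only [dif_neg hu, dif_neg hv]; exact hCD
  refine ⟨fun u => Set.Icc (L u) (R u), fun u => ⟨L u, R u, hLR u, rfl⟩, ?_⟩
  intro u v huv
  rw [SimpleGraph.compl_adj, Set.Icc_inter_Icc, Set.nonempty_Icc, sup_le_iff,
    le_inf_iff, le_inf_iff]
  constructor
  · rintro ⟨-, hn⟩
    have hc : L u ≤ R v ∧ L v ≤ R u := by
      by_contra hcc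
      exact hn ((key u v huv).mpr hcc)
    exact ⟨⟨hLR u, hc.1⟩, hc.2, hLR v⟩
  · rintro ⟨⟨-, h1⟩, h2, -⟩
    refine ⟨huv, ?_⟩
    intro hadjH
    exact (key u v huv).mp hadjH ⟨h1, h2⟩
end

section
/- Let G be a co-interval graph and let x, y be two distinct non-adjacent vertices of G. Then the graph obtained from G by identifying x and y is a co-interval graph. -/
/-- The graph obtained from `G` by identifying the vertex `y` with the vertex `x`:
its vertex set is `V(G) \ {y}`; two vertices distinct from `x` are adjacent iff they
are adjacent in `G`, and `x` is adjacent to a vertex `w` iff `x` or `y` is adjacent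
to `w` in `G`. (This matches the intended description when `x ≠ y` are non-adjacent.) -/
def identifyGraph {V : Type*} (G : SimpleGraph V) (x y : V) :
    SimpleGraph {v : V // v ≠ y} where
  Adj u w := u ≠ w ∧ (G.Adj u.1 w.1 ∨ (u.1 = x ∧ G.Adj y w.1) ∨ (w.1 = x ∧ G.Adj u.1 y))
  symm := by
    constructor
    rintro u w ⟨hne, h⟩
    refine ⟨hne.symm, ?_⟩
    rcases h with h | ⟨hu, h⟩ | ⟨hw, h⟩
    · exact Or.inl h.symm
    · exact Or.inr (Or.inr ⟨hu, h.symm⟩)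
    · exact Or.inr (Or.inl ⟨hw, h.symm⟩)
  loopless := ⟨fun u h => h.1 rfl⟩

/-!
In the complement, identifying the non-adjacent vertices `x`, `y` of `G` becomes: delete `y` and
keep for `x` only the neighbours it shares with `y`. An interval model of `Gᶜ` yields one of the
new graph by giving `x` the interval `I x ∩ I y`; by the Helly property of intervals, it meets the
interval of `w` exactly when both `I x` and `I y` do.
-/

def IsClosedInterval (s : Set ℝ) : Prop :=
  ∃ a b : ℝ, a ≤ b ∧ s = Set.Icc a b

theorem IsClosedInterval.inter {s t : Set ℝ} (hs : IsClosedInterval s) (ht : IsClosedInterval t)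
    (hst : (s ∩ t).Nonempty) : IsClosedInterval (s ∩ t) := by
  obtain ⟨a, b, -, rfl⟩ := hs
  obtain ⟨c, d, -, rfl⟩ := ht
  rw [Set.Icc_inter_Icc, Set.nonempty_Icc] at *
  exact ⟨_, _, hst, rfl⟩

theorem IsClosedInterval.inter_inter_nonempty {s t u : Set ℝ} (hs : IsClosedInterval s)
    (ht : IsClosedInterval t) (hu : IsClosedInterval u) (hst : (s ∩ t).Nonempty)
    (hsu : (s ∩ u).Nonempty) (htu : (t ∩ u).Nonempty) : (s ∩ t ∩ u).Nonempty := by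
  obtain ⟨a, b, -, rfl⟩ := hs
  obtain ⟨c, d, -, rfl⟩ := ht
  obtain ⟨e, f, -, rfl⟩ := hu
  simp only [Set.Icc_inter_Icc, Set.nonempty_Icc, sup_le_iff, le_inf_iff] at *
  tauto

namespace SimpleGraph

variable {V : Type*}

def IsIntervalModel (H : SimpleGraph V) (I : V → Set ℝ) : Prop :=
  (∀ v, IsClosedInterval (I v)) ∧ ∀ u v, u ≠ v → (H.Adj u v ↔ (I u ∩ I v).Nonempty)

theorem isIntervalGraph_iff_exists_isIntervalModel {H : SimpleGraph V} :
    IsIntervalGraph H ↔ ∃ I, H.IsIntervalModel I :=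
  Iff.rfl

def mergeByCommonNeighbors (H : SimpleGraph V) (x y : V) : SimpleGraph {v : V // v ≠ y} where
  Adj u w := H.Adj u w ∧ (u.1 = x → H.Adj y w) ∧ (w.1 = x → H.Adj u y)
  symm := ⟨fun _ _ ⟨huw, hu, hw⟩ => ⟨huw.symm, fun h => (hw h).symm, fun h => (hu h).symm⟩⟩
  loopless := ⟨fun _ h => H.irrefl h.1⟩

theorem compl_identifyGraph (G : SimpleGraph V) (x y : V) :
    (identifyGraph G x y)ᶜ = Gᶜ.mergeByCommonNeighbors x y := by
  ext u w
  have hyw : y ≠ w.1 := w.2.symm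
  have huy : u.1 ≠ y := u.2
  simp only [compl_adj, identifyGraph, mergeByCommonNeighbors, ne_eq, Subtype.ext_iff]
  tauto

namespace IsIntervalModel

variable {H : SimpleGraph V} {I : V → Set ℝ}

theorem adj_and_adj_iff (hI : H.IsIntervalModel I) {x y w : V} (hxy : H.Adj x y)
    (hxw : x ≠ w) (hyw : y ≠ w) :
    H.Adj x w ∧ H.Adj y w ↔ (I x ∩ I y ∩ I w).Nonempty := by
  rw [hI.2 x w hxw, hI.2 y w hyw]
  refine ⟨fun ⟨hx, hy⟩ => (hI.1 x).inter_inter_nonempty (hI.1 y) (hI.1 w)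
    ((hI.2 x y hxy.ne).1 hxy) hx hy, fun ⟨t, ⟨htx, hty⟩, htw⟩ => ⟨⟨t, htx, htw⟩, ⟨t, hty, htw⟩⟩⟩

theorem mergeByCommonNeighbors [DecidableEq V] (hI : H.IsIntervalModel I) {x y : V}
    (hxy : H.Adj x y) :
    (H.mergeByCommonNeighbors x y).IsIntervalModel
      (fun v => if v.1 = x then I x ∩ I y else I v) := by
  refine ⟨fun v => ?_, fun u w huw => ?_⟩
  · dsimp only
    split_ifs
    · exact (hI.1 x).inter (hI.1 y) ((hI.2 x y hxy.ne).1 hxy)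
    · exact hI.1 v
  have huw' : u.1 ≠ w.1 := Subtype.coe_injective.ne huw
  have huy : u.1 ≠ y := u.2
  have hwy : w.1 ≠ y := w.2
  change H.Adj u w ∧ (u.1 = x → H.Adj y w) ∧ (w.1 = x → H.Adj u y) ↔
    ((if u.1 = x then I x ∩ I y else I u) ∩ (if w.1 = x then I x ∩ I y else I w)).Nonempty
  by_cases hu : u.1 = x
  · have hw : w.1 ≠ x := hu ▸ huw'.symm
    rw [if_pos hu, if_neg hw, hu]
    rw [hu] at huw'
    simp only [hw, forall_const, false_imp_iff, and_true]
    exact hI.adj_and_adj_iff hxy huw' hwy.symm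
  by_cases hw : w.1 = x
  · rw [if_neg hu, if_pos hw, hw]
    rw [hw] at huw'
    simp only [hu, forall_const, false_imp_iff, true_and]
    rw [H.adj_comm _ x, H.adj_comm _ y, Set.inter_comm]
    exact hI.adj_and_adj_iff hxy huw'.symm huy.symm
  simp only [hu, hw, if_false, false_imp_iff, and_true]
  exact hI.2 _ _ huw'

end IsIntervalModel

end SimpleGraph

theorem IsIntervalGraph.mergeByCommonNeighbors {V : Type*} {H : SimpleGraph V}
    (hH : IsIntervalGraph H) {x y : V} (hxy : H.Adj x y) :
    IsIntervalGraph (H.mergeByCommonNeighbors x y) := by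
  classical
  obtain ⟨I, hI⟩ := SimpleGraph.isIntervalGraph_iff_exists_isIntervalModel.1 hH
  exact ⟨_, hI.mergeByCommonNeighbors hxy⟩

theorem stmt_4_general {V : Type*} (G : SimpleGraph V) (x y : V)
    (hxy : x ≠ y) (hadj : ¬ G.Adj x y) (hG : IsCoIntervalGraph G) :
    IsCoIntervalGraph (identifyGraph G x y) := by
  rw [IsCoIntervalGraph, SimpleGraph.compl_identifyGraph]
  exact IsIntervalGraph.mergeByCommonNeighbors hG ⟨hxy, hadj⟩

/-- Identifying two distinct non-adjacent vertices of a co-interval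
graph yields a co-interval graph. -/
theorem stmt_4 {V : Type*} [Fintype V] (G : SimpleGraph V) (x y : V)
    (hxy : x ≠ y) (hadj : ¬ G.Adj x y) (hG : IsCoIntervalGraph G) :
    IsCoIntervalGraph (identifyGraph G x y) :=
  stmt_4_general G x y hxy hadj hG
end

section
/- Let G be a finite graph that is a disjoint union of co-interval graphs, and let x, y be two distinct non-adjacent vertices of G lying in the same connected component of G. Then the graph obtained from G by identifying x and y is a disjoint union of co-interval graphs. -/
universe u

/-- `G` is a vertex-disjoint union of co-interval graphs: its vertex set can be
partitioned (here via the fibers of a map `c`) so that every edge joins two vertices of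
the same part and the restriction to each part is a co-interval graph. -/
def IsUnionCoIntervalGraph {V : Type u} (G : SimpleGraph V) : Prop :=
  ∃ (ι : Type u) (c : V → ι),
    (∀ u v : V, G.Adj u v → c u = c v) ∧
    ∀ i : ι, IsCoIntervalGraph (G.induce {v | c v = i})

/-! In the part containing both `x` and `y`, non-adjacency of `x` and `y` means their intervals
meet, so the identified vertex can be given the nonempty interval `I x ∩ I y`. By Helly's property
for intervals, this meets the interval of `w` exactly when both `I x` and `I y` do, i.e. when `w`
is adjacent to neither `x` nor `y`. -/

theorem Set.Icc_inter_Icc_inter_Icc_nonempty_iff {α : Type*} [LinearOrder α] {a b c d e f : α}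
    (h : (Set.Icc a b ∩ Set.Icc c d).Nonempty) :
    (Set.Icc a b ∩ Set.Icc c d ∩ Set.Icc e f).Nonempty ↔
      (Set.Icc a b ∩ Set.Icc e f).Nonempty ∧ (Set.Icc c d ∩ Set.Icc e f).Nonempty := by
  simp only [Set.Icc_inter_Icc, Set.nonempty_Icc, sup_le_iff, le_inf_iff] at *
  tauto

section identifyGraph

variable {V : Type*} {G : SimpleGraph V} {x y : V} {u w : {v : V // v ≠ y}}

theorem identifyGraph_adj_of_ne (hu : u.1 ≠ x) (hw : w.1 ≠ x) :
    (identifyGraph G x y).Adj u w ↔ G.Adj u.1 w.1 := by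
  refine ⟨?_, fun h => ⟨fun huw => h.ne congr($huw.1), Or.inl h⟩⟩
  rintro ⟨-, h | ⟨hu', -⟩ | ⟨hw', -⟩⟩
  exacts [h, absurd hu' hu, absurd hw' hw]

theorem identifyGraph_adj_of_eq (hu : u.1 = x) (hw : w.1 ≠ x) :
    (identifyGraph G x y).Adj u w ↔ G.Adj x w.1 ∨ G.Adj y w.1 := by
  have huw : u ≠ w := fun h => hw (h ▸ hu)
  refine ⟨?_, fun h => ⟨huw, h.imp (hu ▸ id) (Or.inl ⟨hu, ·⟩)⟩⟩
  rintro ⟨-, h | ⟨-, h⟩ | ⟨hw', -⟩⟩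
  exacts [Or.inl (hu ▸ h), Or.inr h, absurd hw' hw]

end identifyGraph

namespace SimpleGraph

variable {V : Type u} {ι : Type*}

theorem compl_induce_adj_iff {G : SimpleGraph V} {s : Set V} {u v : s} (h : u ≠ v) :
    (G.induce s)ᶜ.Adj u v ↔ ¬ G.Adj u v := by
  rw [compl_adj, induce_adj]
  exact and_iff_right h

/-- `IsUnionCoIntervalGraph` with the interval representations of all parts collected into one
map `I` on `V`; intervals in different parts are never compared. -/
structure IsCoIntervalModel (G : SimpleGraph V) (c : V → ι) (I : V → Set ℝ) : Prop where
  eq_of_adj : ∀ ⦃u v⦄, G.Adj u v → c u = c v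
  isInterval : ∀ v, ∃ a b : ℝ, a ≤ b ∧ I v = Set.Icc a b
  not_adj_iff : ∀ ⦃u v⦄, u ≠ v → c u = c v → (¬ G.Adj u v ↔ (I u ∩ I v).Nonempty)

theorem isUnionCoIntervalGraph_iff {G : SimpleGraph V} :
    IsUnionCoIntervalGraph G ↔
      ∃ (ι : Type u) (c : V → ι) (I : V → Set ℝ), G.IsCoIntervalModel c I := by
  constructor
  · rintro ⟨ι, c, hc, hpart⟩
    choose I hI hIadj using hpart
    have hI_eq : ∀ i v (hv : c v = i), I i ⟨v, hv⟩ = I (c v) ⟨v, rfl⟩ := by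
      rintro i v rfl
      rfl
    refine ⟨ι, c, fun v => I (c v) ⟨v, rfl⟩, hc, fun v => hI _ _, fun u v huv hcuv => ?_⟩
    have hne : (⟨u, hcuv⟩ : {w | c w = c v}) ≠ ⟨v, rfl⟩ := fun h => huv congr($h.1)
    rw [← hI_eq _ u hcuv, ← hIadj _ _ _ hne, compl_induce_adj_iff hne]
  · rintro ⟨ι, c, I, hm⟩
    refine ⟨ι, c, hm.eq_of_adj, fun i => ⟨fun v => I v, fun v => hm.isInterval v, ?_⟩⟩
    intro u v huv
    have huv' : u.1 ≠ v.1 := fun h => huv (Subtype.ext h)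
    rw [compl_induce_adj_iff huv, hm.not_adj_iff huv' (u.2.trans v.2.symm)]

namespace IsCoIntervalModel

variable {G : SimpleGraph V} {c : V → ι} {I : V → Set ℝ}

theorem eq_of_reachable (hm : G.IsCoIntervalModel c I) {u v : V} (h : G.Reachable u v) :
    c u = c v := by
  obtain ⟨p⟩ := h
  induction p with
  | nil => rfl
  | cons hadj _ ih => exact (hm.eq_of_adj hadj).trans ih

theorem inter_nonempty (hm : G.IsCoIntervalModel c I) {x y : V} (hxy : x ≠ y)
    (hadj : ¬ G.Adj x y) (hcxy : c x = c y) : (I x ∩ I y).Nonempty :=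
  (hm.not_adj_iff hxy hcxy).1 hadj

theorem not_adj_identifyGraph_iff (hm : G.IsCoIntervalModel c I) {x y : V} (hadj : ¬ G.Adj x y)
    (hcxy : c x = c y) {u w : {v // v ≠ y}} (hu : u.1 = x) (hw : w.1 ≠ x) (hcw : c x = c w.1) :
    ¬ (identifyGraph G x y).Adj u w ↔ (I x ∩ I y ∩ I w.1).Nonempty := by
  have hxy_meet := hm.inter_nonempty (hu ▸ u.2) hadj hcxy
  obtain ⟨a, b, -, hIx⟩ := hm.isInterval x
  obtain ⟨a', b', -, hIy⟩ := hm.isInterval y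
  obtain ⟨a'', b'', -, hIw⟩ := hm.isInterval w.1
  rw [identifyGraph_adj_of_eq hu hw, not_or, hm.not_adj_iff (Ne.symm hw) hcw,
    hm.not_adj_iff (fun h => w.2 h.symm) (hcxy ▸ hcw)]
  rw [hIx, hIy] at hxy_meet ⊢
  rw [hIw, Set.Icc_inter_Icc_inter_Icc_nonempty_iff hxy_meet]

theorem isInterval_inter (hm : G.IsCoIntervalModel c I) {x y : V} (hxy : x ≠ y)
    (hadj : ¬ G.Adj x y) (hcxy : c x = c y) : ∃ a b : ℝ, a ≤ b ∧ I x ∩ I y = Set.Icc a b := by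
  have hxy_meet := hm.inter_nonempty hxy hadj hcxy
  obtain ⟨a, b, -, hIx⟩ := hm.isInterval x
  obtain ⟨a', b', -, hIy⟩ := hm.isInterval y
  rw [hIx, hIy, Set.Icc_inter_Icc] at hxy_meet ⊢
  exact ⟨_, _, Set.nonempty_Icc.1 hxy_meet, rfl⟩

theorem identify [DecidableEq V] (hm : G.IsCoIntervalModel c I) {x y : V} (hadj : ¬ G.Adj x y)
    (hcxy : c x = c y) :
    (identifyGraph G x y).IsCoIntervalModel (fun v => c v.1)
      (fun v => if v.1 = x then I x ∩ I y else I v.1) := by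
  refine ⟨?_, fun v => ?_, fun u w huw hcuw => ?_⟩
  · rintro u w ⟨-, h | ⟨hu, h⟩ | ⟨hw, h⟩⟩
    · exact hm.eq_of_adj h
    · exact (congrArg c hu).trans (hcxy.trans (hm.eq_of_adj h))
    · exact (hm.eq_of_adj h).trans ((congrArg c hw).trans hcxy).symm
  · by_cases hv : v.1 = x
    · simp only [if_pos hv]
      exact hm.isInterval_inter (hv ▸ v.2) hadj hcxy
    · simp only [if_neg hv]
      exact hm.isInterval v.1
  · by_cases hu : u.1 = x
    · have hw : w.1 ≠ x := fun hw => huw (Subtype.ext (hu.trans hw.symm))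
      simp only [if_pos hu, if_neg hw]
      exact hm.not_adj_identifyGraph_iff hadj hcxy hu hw (hu ▸ hcuw)
    · by_cases hw : w.1 = x
      · simp only [if_pos hw, if_neg hu]
        rw [adj_comm, Set.inter_comm]
        exact hm.not_adj_identifyGraph_iff hadj hcxy hw hu (hw ▸ hcuw.symm)
      · simp only [if_neg hu, if_neg hw]
        rw [identifyGraph_adj_of_ne hu hw]
        exact hm.not_adj_iff (fun h => huw (Subtype.ext h)) hcuw

end IsCoIntervalModel

end SimpleGraph

theorem stmt_5_general {V : Type u} (G : SimpleGraph V) (x y : V)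
    (hadj : ¬ G.Adj x y) (hreach : G.Reachable x y)
    (hG : IsUnionCoIntervalGraph G) :
    IsUnionCoIntervalGraph (identifyGraph G x y) := by
  classical
  obtain ⟨ι, c, I, hm⟩ := SimpleGraph.isUnionCoIntervalGraph_iff.mp hG
  exact SimpleGraph.isUnionCoIntervalGraph_iff.mpr
    ⟨ι, _, _, hm.identify hadj (hm.eq_of_reachable hreach)⟩

/-- Identifying two distinct non-adjacent vertices lying in the same
connected component of a vertex-disjoint union of co-interval graphs yields a
vertex-disjoint union of co-interval graphs. -/
theorem stmt_5 {V : Type u} [Fintype V] (G : SimpleGraph V) (x y : V)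
    (hxy : x ≠ y) (hadj : ¬ G.Adj x y) (hreach : G.Reachable x y)
    (hG : IsUnionCoIntervalGraph G) :
    IsUnionCoIntervalGraph (identifyGraph G x y) :=
  stmt_5_general G x y hadj hreach hG
end

section
/- Let H be a finite simple graph and s a positive integer. Then box_ℓ(H) ≤ s if and only if there exist a finite graph G that is a disjoint union of co-interval graphs and an edge-surjective homomorphism φ : G → Hᶜ such that every fiber of φ has at most s elements. (In other words, the local boxicity box_ℓ(H) equals the folded covering number of Hᶜ with respect to disjoint unions of co-interval graphs.) -/
universe u

/-- There is a covering of the edges of `Hᶜ` by finitely many subgraphs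
`G 0, …, G (t-1)` of `Hᶜ`, each of which restricted to its non-isolated vertices is a
co-interval graph, such that every vertex is a non-isolated vertex of at most `s`
of them. -/
def LocalCoverLE {V : Type u} (H : SimpleGraph V) (s : ℕ) : Prop :=
  ∃ (t : ℕ) (G : Fin t → SimpleGraph V),
    (∀ i, G i ≤ Hᶜ) ∧
    (∀ u v : V, Hᶜ.Adj u v → ∃ i, (G i).Adj u v) ∧
    (∀ i, IsCoIntervalGraph ((G i).induce (G i).support)) ∧
    ∀ v : V, {i : Fin t | v ∈ (G i).support}.ncard ≤ s

/-- The local boxicity of `H`. -/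
noncomputable def localBoxicity {V : Type u} (H : SimpleGraph V) : ℕ :=
  sInf {s : ℕ | LocalCoverLE H s}

/-- The union boxicity of `H`: the least `k` such that `Hᶜ` is covered by `k`
subgraphs, each a vertex-disjoint union of co-interval graphs. -/
noncomputable def unionBoxicity {V : Type u} (H : SimpleGraph V) : ℕ :=
  sInf {k : ℕ | ∃ G : Fin k → SimpleGraph V,
    (∀ i, G i ≤ Hᶜ) ∧
    (∀ u v : V, Hᶜ.Adj u v → ∃ i, (G i).Adj u v) ∧
    ∀ i, IsUnionCoIntervalGraph (G i)}

/-- The boxicity of `H`: the least `d` such that `H` is the intersection of `d`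
interval graphs on its vertex set. -/
noncomputable def boxicity {V : Type u} (H : SimpleGraph V) : ℕ :=
  sInf {d : ℕ | ∃ G : Fin d → SimpleGraph V,
    (∀ i, IsIntervalGraph (G i)) ∧
    ∀ u v : V, u ≠ v → (H.Adj u v ↔ ∀ i, (G i).Adj u v)}

/-! A graph is co-interval iff there are reals `α v, β v` such that `u` and `v` are non-adjacent
exactly when `[α u, β u]` and `[α v, β v]` meet; in this form the property passes to pullbacks.

A local cover `G₁, …, G_t` of `Hᶜ` unfolds into the disjoint union of the `Gᵢ` restricted to their
supports, mapped to `Hᶜ` by forgetting the index: the fibre of `v` is the set of `i` with `v` in the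
support of `Gᵢ`. Conversely, a fold `φ : G → Hᶜ` yields the local cover formed by the images of the
parts of `G`; a vertex lies in at most as many images as it has preimages. Each image is again
co-interval by the one-dimensional Helly property: the fibre of a vertex is independent in `G`, so
its intervals pairwise meet and the vertex can be given their common intersection. -/

open SimpleGraph

theorem isCoIntervalGraph_iff {V : Type*} (G : SimpleGraph V) :
    IsCoIntervalGraph G ↔ ∃ α β : V → ℝ, ∀ u v, ¬ G.Adj u v ↔ α u ≤ β v ∧ α v ≤ β u := by
  have meet (a b c d : ℝ) (hab : a ≤ b) (hcd : c ≤ d) :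
      (Set.Icc a b ∩ Set.Icc c d).Nonempty ↔ a ≤ d ∧ c ≤ b := by
    rw [Set.Icc_inter_Icc, Set.nonempty_Icc, sup_le_iff, le_inf_iff, le_inf_iff]
    tauto
  constructor
  · rintro ⟨I, hI, hadj⟩
    choose α β hαβ hIα using hI
    refine ⟨α, β, fun u v => ?_⟩
    obtain rfl | huv := eq_or_ne u v
    · simp [hαβ]
    · rw [← meet _ _ _ _ (hαβ u) (hαβ v), ← hIα, ← hIα, ← hadj u v huv, compl_adj]
      tauto
  · rintro ⟨α, β, h⟩
    have hαβ v : α v ≤ β v := ((h v v).1 (G.loopless.irrefl v)).1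
    refine ⟨fun v => Set.Icc (α v) (β v), fun v => ⟨_, _, hαβ v, rfl⟩, fun u v huv => ?_⟩
    rw [meet _ _ _ _ (hαβ u) (hαβ v), compl_adj, ← h]
    tauto

theorem IsCoIntervalGraph.comap {V W : Type*} {G : SimpleGraph W} (hG : IsCoIntervalGraph G)
    (f : V → W) : IsCoIntervalGraph (G.comap f) := by
  obtain ⟨α, β, h⟩ := (isCoIntervalGraph_iff G).1 hG
  exact (isCoIntervalGraph_iff _).2 ⟨α ∘ f, β ∘ f, fun u v => h (f u) (f v)⟩

theorem isCoIntervalGraph_of_pairwise_adj {V : Type*} [Countable V] {G : SimpleGraph V}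
    (h : Pairwise G.Adj) : IsCoIntervalGraph G := by
  obtain ⟨f, hf⟩ := Countable.exists_injective_nat V
  refine (isCoIntervalGraph_iff G).2 ⟨fun v => f v, fun v => f v, fun u v => ?_⟩
  rw [← le_antisymm_iff, Nat.cast_inj, hf.eq_iff]
  exact ⟨not_imp_comm.1 (@h u v), fun huv => huv ▸ G.loopless.irrefl u⟩

theorem SimpleGraph.map_adj_iff_of_adj_ne {V W : Type*} {G : SimpleGraph V} {f : V → W}
    (hf : ∀ a b, G.Adj a b → f a ≠ f b) (x y : W) :
    (G.map f).Adj x y ↔ ∃ a b, G.Adj a b ∧ f a = x ∧ f b = y :=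
  ⟨fun h => h.2, fun ⟨a, b, hab, ha, hb⟩ => ⟨ha ▸ hb ▸ hf a b hab, a, b, hab, ha, hb⟩⟩

theorem IsCoIntervalGraph.induce_map {V W : Type*} [Finite V] {G : SimpleGraph V}
    (hG : IsCoIntervalGraph G) {f : V → W} (hf : ∀ a b, G.Adj a b → f a ≠ f b) {S : Set W}
    (hS : S ⊆ Set.range f) : IsCoIntervalGraph ((G.map f).induce S) := by
  classical
  have := Fintype.ofFinite V
  obtain ⟨α, β, h⟩ := (isCoIntervalGraph_iff G).1 hG
  let fiber (x : S) : Finset V := {a | f a = x}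
  have fiber_nonempty (x : S) : (fiber x).Nonempty := by
    obtain ⟨a, ha⟩ := hS x.2
    exact ⟨a, by simp [fiber, ha]⟩
  refine (isCoIntervalGraph_iff _).2 ⟨fun x => (fiber x).sup' (fiber_nonempty x) α,
    fun x => (fiber x).inf' (fiber_nonempty x) β, fun x y => ?_⟩
  simp only [comap_adj, Function.Embedding.subtype_apply, map_adj_iff_of_adj_ne hf,
    Finset.sup'_le_iff, Finset.le_inf'_iff, fiber, Finset.mem_filter_univ, ← forall_and]
  -- no edge of `G` joins the fibres of `x` and `y` iff all their intervals meet pairwise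
  grind

def SimpleGraph.sigmaSupport {ι V : Type*} (G : ι → SimpleGraph V) :
    SimpleGraph {q : ι × V // q.2 ∈ (G q.1).support} where
  Adj p q := p.1.1 = q.1.1 ∧ (G p.1.1).Adj p.1.2 q.1.2
  symm := ⟨fun _ _ ⟨hpq, h⟩ => ⟨hpq.symm, hpq ▸ h.symm⟩⟩
  loopless := ⟨fun _ h => (G _).loopless.irrefl _ h.2⟩

theorem SimpleGraph.isUnionCoIntervalGraph_sigmaSupport {ι V : Type u} {G : ι → SimpleGraph V}
    (hG : ∀ i, IsCoIntervalGraph ((G i).induce (G i).support)) :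
    IsUnionCoIntervalGraph (sigmaSupport G) := by
  refine ⟨ι, fun q => q.1.1, fun _ _ h => h.1, fun i => ?_⟩
  have part_eq : (sigmaSupport G).induce {q | q.1.1 = i} =
      ((G i).induce (G i).support).comap fun q =>
        ⟨q.1.1.2, by obtain ⟨⟨⟨j, x⟩, hx⟩, rfl⟩ := q; exact hx⟩ := by
    ext ⟨⟨⟨j, x⟩, hx⟩, rfl : j = i⟩ ⟨⟨⟨k, y⟩, hy⟩, rfl : k = j⟩
    simp [sigmaSupport]
  rw [part_eq]
  exact (hG i).comap _

theorem LocalCoverLE.mono {V : Type u} {H : SimpleGraph V} {s s' : ℕ} (h : LocalCoverLE H s)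
    (hss : s ≤ s') : LocalCoverLE H s' := by
  obtain ⟨t, G, hle, hcov, hG, hcard⟩ := h
  exact ⟨t, G, hle, hcov, hG, fun v => (hcard v).trans hss⟩

theorem localCoverLE_of_finite {V : Type u} {ι : Type*} [Finite ι] {H : SimpleGraph V} {s : ℕ}
    (G : ι → SimpleGraph V) (hle : ∀ i, G i ≤ Hᶜ)
    (hcov : ∀ u v : V, Hᶜ.Adj u v → ∃ i, (G i).Adj u v)
    (hG : ∀ i, IsCoIntervalGraph ((G i).induce (G i).support))
    (hcard : ∀ v : V, {i | v ∈ (G i).support}.ncard ≤ s) : LocalCoverLE H s := by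
  obtain ⟨t, ⟨e⟩⟩ := Finite.exists_equiv_fin ι
  refine ⟨t, G ∘ e.symm, fun j => hle _, fun u v huv => ?_, fun j => hG _, fun v => ?_⟩
  · obtain ⟨i, hi⟩ := hcov u v huv
    exact ⟨e i, by simpa using hi⟩
  · exact (Set.ncard_preimage_of_injective_subset_range e.symm.injective (by simp)).trans_le
      (hcard v)

theorem exists_localCoverLE {V : Type u} [Finite V] (H : SimpleGraph V) :
    ∃ s, LocalCoverLE H s := by
  let ι := {p : V × V // Hᶜ.Adj p.1 p.2}
  refine ⟨Nat.card ι, localCoverLE_of_finite (fun p : ι => edge p.1.1 p.1.2)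
    (fun p => (edge_le_iff _).2 (.inr p.2)) (fun u v huv => ⟨⟨(u, v), huv⟩, ?_⟩)
    (fun p => isCoIntervalGraph_of_pairwise_adj ?_) (fun v => Set.ncard_le_card _)⟩
  · exact (edge_adj ..).2 ⟨.inl ⟨rfl, rfl⟩, huv.ne⟩
  · rintro ⟨x, x', hx⟩ ⟨y, y', hy⟩ hxy
    simp only [comap_adj, Function.Embedding.subtype_apply, ne_eq] at *
    grind

theorem exists_fold_of_localCoverLE {V : Type} [Finite V] {H : SimpleGraph V} {s : ℕ}
    (h : LocalCoverLE H s) :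
    ∃ (U : Type) (_ : Fintype U) (G : SimpleGraph U) (φ : G →g Hᶜ),
      IsUnionCoIntervalGraph G ∧
      (∀ u v : V, Hᶜ.Adj u v → ∃ a b : U, G.Adj a b ∧ φ a = u ∧ φ b = v) ∧
      ∀ v : V, {u : U | φ u = v}.ncard ≤ s := by
  obtain ⟨t, G, hle, hcov, hG, hcard⟩ := h
  let φ : sigmaSupport G →g Hᶜ := ⟨fun q => q.1.2, fun h => hle _ h.2⟩
  refine ⟨_, Fintype.ofFinite _, sigmaSupport G, φ, isUnionCoIntervalGraph_sigmaSupport hG,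
    fun u v huv => ?_,
    fun v => (Set.ncard_le_ncard_of_injOn (fun q => q.1.1) ?_ ?_).trans (hcard v)⟩
  · obtain ⟨i, hi⟩ := hcov u v huv
    exact ⟨⟨(i, u), v, hi⟩, ⟨(i, v), u, hi.symm⟩, ⟨rfl, hi⟩, rfl, rfl⟩
  · rintro ⟨⟨i, _⟩, hv⟩ rfl
    exact hv
  · rintro ⟨⟨i, x⟩, _⟩ (rfl : x = v) ⟨⟨j, y⟩, _⟩ (rfl : y = x) (rfl : i = j)
    rfl

theorem localCoverLE_of_fold {V U : Type*} [Finite U] {H : SimpleGraph V} {s : ℕ}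
    {G : SimpleGraph U} (φ : G →g Hᶜ) (hG : IsUnionCoIntervalGraph G)
    (hsurj : ∀ u v : V, Hᶜ.Adj u v → ∃ a b : U, G.Adj a b ∧ φ a = u ∧ φ b = v)
    (hfib : ∀ v : V, {a : U | φ a = v}.ncard ≤ s) : LocalCoverLE H s := by
  obtain ⟨ι, c, hc, hparts⟩ := hG
  let part (i : Set.range c) : Set U := {a | c a = i}
  let image (i : Set.range c) : SimpleGraph V := (G.induce (part i)).map (φ ∘ (↑))
  have hf (i : Set.range c) : ∀ a b : part i, G.Adj a b → φ a ≠ φ b :=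
    fun a b hab => (φ.map_rel hab).ne
  have support_subset (i : Set.range c) :
      (image i).support ⊆ Set.range (φ ∘ (↑) : part i → V) := by
    rintro _ ⟨_, -, a, _, -, rfl, -⟩
    exact ⟨a, rfl⟩
  refine localCoverLE_of_finite image (fun i => ?_) (fun u v huv => ?_)
    (fun i => (hparts i).induce_map (hf i) (support_subset i)) (fun v => ?_)
  · rintro _ _ ⟨-, a, b, hab, rfl, rfl⟩
    exact φ.map_rel hab
  · obtain ⟨a, b, hab, rfl, rfl⟩ := hsurj u v huv
    exact ⟨⟨c a, a, rfl⟩, huv.ne, ⟨a, rfl⟩, ⟨b, (hc a b hab).symm⟩, hab, rfl, rfl⟩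
  · calc {i | v ∈ (image i).support}.ncard
        ≤ ((fun a => (⟨c a, a, rfl⟩ : Set.range c)) '' {a | φ a = v}).ncard := by
          refine Set.ncard_le_ncard (fun i hi => ?_) (Set.toFinite _)
          obtain ⟨a, ha⟩ := support_subset i hi
          exact ⟨a, ha, Subtype.ext a.2⟩
      _ ≤ s := (Set.ncard_image_le (Set.toFinite _)).trans (hfib v)

theorem stmt_6_general {V : Type} [Fintype V] (H : SimpleGraph V) (s : ℕ) :
    localBoxicity H ≤ s ↔
    ∃ (U : Type) (_ : Fintype U) (G : SimpleGraph U) (φ : G →g Hᶜ),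
      IsUnionCoIntervalGraph G ∧
      (∀ u v : V, Hᶜ.Adj u v → ∃ a b : U, G.Adj a b ∧ φ a = u ∧ φ b = v) ∧
      ∀ v : V, {u : U | φ u = v}.ncard ≤ s := by
  constructor
  · intro h
    have hmin : LocalCoverLE H (localBoxicity H) := Nat.sInf_mem (exists_localCoverLE H)
    exact exists_fold_of_localCoverLE (hmin.mono h)
  · rintro ⟨U, _, G, φ, hG, hsurj, hfib⟩
    exact Nat.sInf_le (localCoverLE_of_fold φ hG hsurj hfib)

/-- `box_ℓ(H) ≤ s` iff there is a disjoint union of co-interval graphs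
`G` together with an edge-surjective homomorphism `φ : G → Hᶜ` all of whose fibers have
at most `s` elements, i.e. the local boxicity equals the folded covering number of `Hᶜ`
with respect to disjoint unions of co-interval graphs. -/
theorem stmt_6 {V : Type} [Fintype V] (H : SimpleGraph V) (s : ℕ) (hs : 0 < s) :
    localBoxicity H ≤ s ↔
    ∃ (U : Type) (_ : Fintype U) (G : SimpleGraph U) (φ : G →g Hᶜ),
      IsUnionCoIntervalGraph G ∧
      (∀ u v : V, Hᶜ.Adj u v → ∃ a b : U, G.Adj a b ∧ φ a = u ∧ φ b = v) ∧
      ∀ v : V, {u : U | φ u = v}.ncard ≤ s :=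
  stmt_6_general H s
end

section
/- Let k be a positive integer and let F be a nonempty finite simple graph in which every vertex has degree exactly 2k and every cycle has length at least 6. Suppose G_1, …, G_t are subgraphs of F such that every edge of F is an edge of some G_i, each G_i restricted to its set of non-isolated vertices is a co-interval graph, and every vertex of F is a non-isolated vertex of at most s of the G_i. Then s ≥ k. In particular, box_ℓ(Fᶜ) ≥ k for the complement Fᶜ of F. -/
universe u

/-!
A co-interval graph has no induced `2K₂`: two disjoint intervals cannot both meet each of two
other disjoint intervals. In a `2K₂`-free graph the two end edges of a path on five vertices are
joined by an edge, which closes a cycle of length at most 5. Hence, when `F` has girth at least 6,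
every co-interval subgraph `Gᵢ` of `F` is a forest and has at most `|supp Gᵢ|` edges, and counting
the edges of `F` through the cover gives `k · |V| = |E(F)| ≤ ∑ᵢ |supp Gᵢ| ≤ s · |V|`.
-/

open Finset

theorem Set.Icc_inter_Icc_nonempty_of_meets_disjoint {α : Type*} [LinearOrder α]
    {a₁ a₂ b₁ b₂ c₁ c₂ d₁ d₂ : α} (hab : ¬(Icc a₁ a₂ ∩ Icc b₁ b₂).Nonempty)
    (hac : (Icc a₁ a₂ ∩ Icc c₁ c₂).Nonempty) (hbc : (Icc b₁ b₂ ∩ Icc c₁ c₂).Nonempty)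
    (had : (Icc a₁ a₂ ∩ Icc d₁ d₂).Nonempty) (hbd : (Icc b₁ b₂ ∩ Icc d₁ d₂).Nonempty) :
    (Icc c₁ c₂ ∩ Icc d₁ d₂).Nonempty := by
  simp only [Icc_inter_Icc, nonempty_Icc, sup_le_iff, le_inf_iff] at *
  grind

namespace SimpleGraph

variable {V : Type*}

def IsTwoK₂Free (G : SimpleGraph V) : Prop :=
  ∀ ⦃a b c d : V⦄, G.Adj a b → G.Adj c d → a ≠ c → a ≠ d → b ≠ c → b ≠ d →
    G.Adj a c ∨ G.Adj a d ∨ G.Adj b c ∨ G.Adj b d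

section Girth

variable {G : SimpleGraph V}

theorem IsTwoK₂Free.of_induce_support (h : (G.induce G.support).IsTwoK₂Free) :
    G.IsTwoK₂Free := by
  intro a b c d hab hcd hac had hbc hbd
  simpa using h (a := ⟨a, b, hab⟩) (b := ⟨b, a, hab.symm⟩) (c := ⟨c, d, hcd⟩)
    (d := ⟨d, c, hcd.symm⟩) (by simpa using hab) (by simpa using hcd)
    (by simpa [Subtype.ext_iff] using hac) (by simpa [Subtype.ext_iff] using had)
    (by simpa [Subtype.ext_iff] using hbc) (by simpa [Subtype.ext_iff] using hbd)

theorem Walk.IsPath.egirth_le_length_add_one {u v : V} {p : G.Walk u v} (hp : p.IsPath)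
    (h : G.Adj v u) (hl : 2 ≤ p.length) : G.egirth ≤ p.length + 1 := by
  have hc : (Walk.cons h p).IsCycle := by
    refine (Walk.cons_isCycle_iff p h).2 ⟨hp, fun he => ?_⟩
    have := hp.eq_snd_of_mem_edges (Sym2.eq_swap ▸ he)
    rw [Walk.snd, eq_comm, hp.getVert_eq_end_iff (by omega)] at this
    omega
  exact_mod_cast egirth_le_length hc

theorem IsTwoK₂Free.length_le_three_of_isPath (hG : G.IsTwoK₂Free) (hg : 6 ≤ G.egirth)
    {u v : V} {p : G.Walk u v} (hp : p.IsPath) : p.length ≤ 3 := by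
  by_contra! h4
  obtain ⟨_, q, hq, hl⟩ : ∃ w, ∃ q : G.Walk u w, q.IsPath ∧ q.length = 4 :=
    ⟨_, p.take 4, hp.take 4, by simp only [Walk.take_length, inf_eq_left]; omega⟩
  obtain _ | ⟨a₀₁, _ | ⟨a₁₂, _ | ⟨a₂₃, _ | ⟨a₃₄, _ | ⟨_, _⟩⟩⟩⟩⟩ := q <;>
    simp only [Walk.length_cons, Walk.length_nil, zero_add, Nat.reduceAdd, Nat.reduceEqDiff,
      OfNat.zero_ne_ofNat, OfNat.one_ne_ofNat] at hl
  simp only [Walk.cons_isPath_iff, Walk.support_cons, Walk.support_nil, List.mem_cons,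
    List.not_mem_nil] at hq
  have long : ∀ {x y} (r : G.Walk x y), r.IsPath → G.Adj y x → 2 ≤ r.length → 5 ≤ r.length :=
    fun r hr h hl => by
      have := hg.trans (hr.egirth_le_length_add_one h hl)
      norm_cast at this
      omega
  rcases hG a₀₁ a₃₄ (by tauto) (by tauto) (by tauto) (by tauto) with h | h | h | h
  · exact absurd (long (.cons a₀₁ (.cons a₁₂ (.cons a₂₃ .nil))) (by simp_all) h.symm (by simp))
      (by simp)
  · exact absurd (long (.cons a₀₁ (.cons a₁₂ (.cons a₂₃ (.cons a₃₄ .nil)))) (by simp_all) h.symm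
      (by simp)) (by simp)
  · exact absurd (long (.cons a₁₂ (.cons a₂₃ .nil)) (by simp_all) h.symm (by simp)) (by simp)
  · exact absurd (long (.cons a₁₂ (.cons a₂₃ (.cons a₃₄ .nil))) (by simp_all) h.symm (by simp))
      (by simp)

theorem IsTwoK₂Free.isAcyclic (hG : G.IsTwoK₂Free) (hg : 6 ≤ G.egirth) : G.IsAcyclic := by
  intro v c hc
  have h6 : 6 ≤ c.length := by exact_mod_cast hg.trans (egirth_le_length hc)
  have := hG.length_le_three_of_isPath hg hc.isPath_tail
  have := c.length_tail_add_one hc.not_nil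
  omega

end Girth

section Counting

variable {ι : Type*} [Fintype ι]

theorem card_edgeFinset_le_sum_of_forall_adj {F : SimpleGraph V} {G : ι → SimpleGraph V}
    [Fintype F.edgeSet] [∀ i, Fintype (G i).edgeSet] (h : ∀ u v, F.Adj u v → ∃ i, (G i).Adj u v) :
    #F.edgeFinset ≤ ∑ i, #(G i).edgeFinset := by
  classical
  refine (card_le_card fun e he => ?_).trans card_biUnion_le
  induction e using Sym2.ind
  simpa using h _ _ (by simpa using he)

variable [Fintype V]

theorem IsAcyclic.card_edgeFinset_le_card {G : SimpleGraph V} [Fintype G.edgeSet]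
    (h : G.IsAcyclic) : #G.edgeFinset ≤ Fintype.card V := by
  cases isEmpty_or_nonempty V
  · simp [Subsingleton.elim G ⊥]
  classical
  obtain ⟨T, hGT, -, hT⟩ := connected_top.exists_isTree_le_of_le_of_isAcyclic le_top h
  have := hT.card_edgeFinset
  calc #G.edgeFinset ≤ #T.edgeFinset := card_le_card (edgeFinset_mono hGT)
    _ ≤ Fintype.card V := by omega

theorem IsAcyclic.card_edgeFinset_le_ncard_support {G : SimpleGraph V} [DecidableRel G.Adj]
    (h : G.IsAcyclic) : #G.edgeFinset ≤ G.support.ncard := by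
  classical
  rw [← card_edgeFinset_induce_support, ← Nat.card_coe_set_eq, Nat.card_eq_fintype_card]
  exact (h.induce _).card_edgeFinset_le_card

theorem isRegularOfDegree_of_ncard_neighborSet {G : SimpleGraph V} [DecidableRel G.Adj] {d : ℕ}
    (h : ∀ v, (G.neighborSet v).ncard = d) : G.IsRegularOfDegree d := fun v => by
  rw [← card_neighborSet_eq_degree, ← Nat.card_eq_fintype_card, Nat.card_coe_set_eq, h]

theorem IsRegularOfDegree.two_mul_card_edgeFinset {G : SimpleGraph V} [DecidableRel G.Adj]
    {d : ℕ} (h : G.IsRegularOfDegree d) : 2 * #G.edgeFinset = Fintype.card V * d := by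
  rw [← sum_degrees_eq_twice_card_edges, sum_congr rfl fun v _ => h.degree_eq v]
  simp

theorem sum_ncard_support_le (G : ι → SimpleGraph V) {s : ℕ}
    (h : ∀ v, {i | v ∈ (G i).support}.ncard ≤ s) :
    ∑ i, (G i).support.ncard ≤ Fintype.card V * s := by
  classical
  calc ∑ i, (G i).support.ncard = ∑ i, #{v | v ∈ (G i).support} := by
        simp [Set.ncard_eq_toFinset_card']
    _ = ∑ v, #{i | v ∈ (G i).support} :=
        sum_card_bipartiteAbove_eq_sum_card_bipartiteBelow (r := fun i v => v ∈ (G i).support)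
    _ = ∑ v, {i | v ∈ (G i).support}.ncard := by
        simp [Set.ncard_eq_toFinset_card']
    _ ≤ ∑ _v : V, s := sum_le_sum fun v _ => h v
    _ = Fintype.card V * s := by simp

end Counting

end SimpleGraph

open SimpleGraph

theorem IsCoIntervalGraph.isTwoK₂Free {V : Type*} {G : SimpleGraph V}
    (hG : IsCoIntervalGraph G) : G.IsTwoK₂Free := by
  obtain ⟨I, hI, hmeet⟩ := hG
  choose l r _ hI using hI
  obtain rfl : I = fun v => Set.Icc (l v) (r v) := funext hI
  have nonadj_iff : ∀ u v, u ≠ v →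
      (¬G.Adj u v ↔ (Set.Icc (l u) (r u) ∩ Set.Icc (l v) (r v)).Nonempty) :=
    fun u v huv => by rw [← hmeet u v huv, compl_adj]; tauto
  intro a b c d hab hcd hac had hbc hbd
  by_contra! h
  exact (nonadj_iff c d hcd.ne).2 (Set.Icc_inter_Icc_nonempty_of_meets_disjoint
    (fun h' => (nonadj_iff a b hab.ne).2 h' hab) ((nonadj_iff a c hac).1 h.1)
    ((nonadj_iff b c hbc).1 h.2.2.1) ((nonadj_iff a d had).1 h.2.1)
    ((nonadj_iff b d hbd).1 h.2.2.2)) hcd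

theorem LocalCoverLE.card_edgeFinset_le {V : Type u} [Fintype V] {F : SimpleGraph V}
    [Fintype F.edgeSet] {s : ℕ} (h : LocalCoverLE Fᶜ s) (hg : 6 ≤ F.egirth) :
    #F.edgeFinset ≤ Fintype.card V * s := by
  classical
  obtain ⟨t, G, hsub, hcov, hco, hloc⟩ := h
  rw [compl_compl] at hsub hcov
  have hacyc : ∀ i, (G i).IsAcyclic := fun i =>
    (hco i).isTwoK₂Free.of_induce_support.isAcyclic (hg.trans (egirth_anti (hsub i)))
  calc #F.edgeFinset ≤ ∑ i, #(G i).edgeFinset := card_edgeFinset_le_sum_of_forall_adj hcov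
    _ ≤ ∑ i, (G i).support.ncard :=
        sum_le_sum fun i _ => (hacyc i).card_edgeFinset_le_ncard_support
    _ ≤ Fintype.card V * s := sum_ncard_support_le G hloc

theorem stmt_9_general {V : Type} [Fintype V] [Nonempty V] (k : ℕ)
    (F : SimpleGraph V)
    (hreg : ∀ v : V, (F.neighborSet v).ncard = 2 * k)
    (hgirth : ∀ (v : V) (w : F.Walk v v), w.IsCycle → 6 ≤ w.length)
    (t s : ℕ) (G : Fin t → SimpleGraph V)
    (hsub : ∀ i, G i ≤ F)
    (hcov : ∀ u v : V, F.Adj u v → ∃ i, (G i).Adj u v)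
    (hco : ∀ i, IsCoIntervalGraph ((G i).induce (G i).support))
    (hloc : ∀ v : V, {i : Fin t | v ∈ (G i).support}.ncard ≤ s) :
    k ≤ s ∧ k ≤ localBoxicity Fᶜ := by
  classical
  have hedges : 2 * #F.edgeFinset = Fintype.card V * (2 * k) :=
    (isRegularOfDegree_of_ncard_neighborSet hreg).two_mul_card_edgeFinset
  have hF : 6 ≤ F.egirth := le_egirth.2 fun v w hw => mod_cast hgirth v w hw
  have le_of_cover : ∀ s', LocalCoverLE Fᶜ s' → k ≤ s' := fun s' h => by
    have := h.card_edgeFinset_le hF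
    exact le_of_mul_le_mul_left (a := Fintype.card V) (by linarith) Fintype.card_pos
  have hs : LocalCoverLE Fᶜ s := ⟨t, G, by rwa [compl_compl], by rwa [compl_compl], hco, hloc⟩
  exact ⟨le_of_cover s hs, le_csInf ⟨s, hs⟩ le_of_cover⟩

/-- Let `F` be a nonempty finite `2k`-regular graph of girth at least 6.
If subgraphs `G 0, …, G (t-1)` of `F` cover all edges of `F`, each restricted to its
non-isolated vertices is a co-interval graph, and every vertex is a non-isolated vertex
of at most `s` of them, then `s ≥ k`; in particular `box_ℓ(Fᶜ) ≥ k`. -/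
theorem stmt_9 {V : Type} [Fintype V] [Nonempty V] (k : ℕ) (hk : 0 < k)
    (F : SimpleGraph V)
    (hreg : ∀ v : V, (F.neighborSet v).ncard = 2 * k)
    (hgirth : ∀ (v : V) (w : F.Walk v v), w.IsCycle → 6 ≤ w.length)
    (t s : ℕ) (G : Fin t → SimpleGraph V)
    (hsub : ∀ i, G i ≤ F)
    (hcov : ∀ u v : V, F.Adj u v → ∃ i, (G i).Adj u v)
    (hco : ∀ i, IsCoIntervalGraph ((G i).induce (G i).support))
    (hloc : ∀ v : V, {i : Fin t | v ∈ (G i).support}.ncard ≤ s) :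
    k ≤ s ∧ k ≤ localBoxicity Fᶜ :=
  stmt_9_general k F hreg hgirth t s G hsub hcov hco hloc
end

section
/- For every n ≥ 1, the complement of the line graph of the complete graph K_n has local boxicity at most 2; that is, box_ℓ((L(K_n))ᶜ) ≤ 2. -/
universe u

/-- The line graph of the complete graph `K_n`: vertices are the 2-element subsets of
`Fin n`, two of them adjacent iff they share exactly one element. -/
def lineGraphCompleteGraph (n : ℕ) :
    SimpleGraph {s : Finset (Fin n) // s.card = 2} where
  Adj a b := ((a : Finset (Fin n)) ∩ (b : Finset (Fin n))).card = 1
  symm := by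
    constructor
    intro a b h
    rwa [Finset.inter_comm]
  loopless := by
    constructor
    intro a h
    rw [Finset.inter_self, a.2] at h
    exact absurd h (by norm_num)

/-!
The complement of `L(K_n)ᶜ` is `L(K_n)` itself, whose edges are covered by the `n` stars
`{ {i, j} | j ≠ i }`, each a clique. A clique is a co-interval graph (its complement is
realized by pairwise disjoint point intervals), and every vertex `{i, j}` lies in exactly
the two stars at `i` and `j`.
-/

namespace SimpleGraph

variable {V : Type u}

theorem isIntervalGraph_bot [Countable V] : IsIntervalGraph (⊥ : SimpleGraph V) := by
  obtain ⟨f, hf⟩ := Countable.exists_injective_nat V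
  refine ⟨fun v => Set.Icc (f v : ℝ) (f v), fun v => ⟨_, _, le_rfl, rfl⟩, fun u v huv => ?_⟩
  simp only [bot_adj, false_iff, Set.Icc_self, Set.singleton_inter_nonempty,
    Set.mem_singleton_iff, Nat.cast_inj]
  exact fun h => huv (hf h)

theorem isCoIntervalGraph_top [Countable V] : IsCoIntervalGraph (⊤ : SimpleGraph V) := by
  rw [IsCoIntervalGraph, compl_top]
  exact isIntervalGraph_bot

def completeOn (s : Set V) : SimpleGraph V where
  Adj u v := u ≠ v ∧ u ∈ s ∧ v ∈ s
  symm := ⟨fun _ _ ⟨h, hu, hv⟩ => ⟨h.symm, hv, hu⟩⟩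
  loopless := ⟨fun _ h => h.1 rfl⟩

theorem support_completeOn_subset (s : Set V) : (completeOn s).support ⊆ s :=
  fun _ ⟨_, h⟩ => h.2.1

theorem induce_support_completeOn (s : Set V) :
    (completeOn s).induce (completeOn s).support = ⊤ := by
  ext u v
  exact ⟨fun h => h.1 ∘ congrArg Subtype.val, fun h =>
    ⟨fun huv => h (Subtype.ext huv), support_completeOn_subset s u.2,
      support_completeOn_subset s v.2⟩⟩

theorem localBoxicity_compl_le_of_cliqueCover [Countable V] (H : SimpleGraph V) {t s : ℕ}
    (C : Fin t → Set V) (hclique : ∀ i, H.IsClique (C i))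
    (hcover : ∀ u v, H.Adj u v → ∃ i, u ∈ C i ∧ v ∈ C i)
    (hdeg : ∀ v, {i | v ∈ C i}.ncard ≤ s) : localBoxicity Hᶜ ≤ s := by
  refine Nat.sInf_le ⟨t, fun i => completeOn (C i), fun i u v huv => ?_, fun u v huv => ?_,
    fun i => ?_, fun v => ?_⟩
  · rw [compl_compl]
    exact hclique i huv.2.1 huv.2.2 huv.1
  · rw [compl_compl] at huv
    obtain ⟨i, hu, hv⟩ := hcover u v huv
    exact ⟨i, huv.ne, hu, hv⟩
  · rw [induce_support_completeOn]
    exact isCoIntervalGraph_top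
  · exact (Set.ncard_le_ncard fun i hi => support_completeOn_subset (C i) hi).trans (hdeg v)

end SimpleGraph

theorem Finset.card_inter_lt_of_card_eq_of_ne {α : Type*} [DecidableEq α] {a b : Finset α}
    (hcard : a.card = b.card) (hab : a ≠ b) : (a ∩ b).card < a.card := by
  refine Finset.card_lt_card (Finset.inter_subset_left.ssubset_of_ne fun h => hab ?_)
  exact Finset.eq_of_subset_of_card_le (Finset.inter_eq_left.mp h) hcard.ge

theorem lineGraphCompleteGraph_adj_iff {n : ℕ} {a b : {s : Finset (Fin n) // s.card = 2}} :
    (lineGraphCompleteGraph n).Adj a b ↔ a ≠ b ∧ ∃ i, i ∈ a.1 ∧ i ∈ b.1 := by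
  refine ⟨fun h => ⟨(lineGraphCompleteGraph n).ne_of_adj h, ?_⟩, fun ⟨hab, i, ha, hb⟩ => ?_⟩
  · obtain ⟨i, hi⟩ := Finset.card_eq_one.mp h
    exact ⟨i, Finset.mem_inter.mp (hi ▸ Finset.mem_singleton_self i)⟩
  · have hlt := Finset.card_inter_lt_of_card_eq_of_ne (a.2.trans b.2.symm)
      (hab ∘ Subtype.ext)
    have hpos : 0 < (a.1 ∩ b.1).card := Finset.card_pos.mpr ⟨i, Finset.mem_inter.mpr ⟨ha, hb⟩⟩
    change (a.1 ∩ b.1).card = 1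
    omega

theorem stmt_11_general (n : ℕ) :
    localBoxicity (lineGraphCompleteGraph n)ᶜ ≤ 2 := by
  refine SimpleGraph.localBoxicity_compl_le_of_cliqueCover _ (fun i => {v | i ∈ v.1})
    (fun i _ hu _ hv huv => lineGraphCompleteGraph_adj_iff.mpr ⟨huv, i, hu, hv⟩)
    (fun u v huv => (lineGraphCompleteGraph_adj_iff.mp huv).2) (fun v => ?_)
  change (v.1 : Set (Fin n)).ncard ≤ 2
  rw [Set.ncard_coe_finset, v.2]

/-- For every `n ≥ 1`, the complement of the line graph of `K_n`
has local boxicity at most 2. -/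
theorem stmt_11 (n : ℕ) (hn : 1 ≤ n) :
    localBoxicity (lineGraphCompleteGraph n)ᶜ ≤ 2 :=
  stmt_11_general n
end

section
/- For every positive integer k there exists a positive integer n such that the complement of the line graph of the complete graph K_n has union boxicity greater than k; that is, ūbox((L(K_n))ᶜ) > k. -/
universe u

/-!
A disjoint union of co-interval graphs is the comparability graph of a transitive relation: on
each part, "the interval of `u` lies left of the interval of `v`". Given a cover of `L(K_n)` by
`m` such graphs, colour each triple `x < y < z` by a relation containing the edge `xy ~ yz` in
one of its two directions, and by that direction. If `n > 2 ^ 2 ^ (2 * m)`, a two-step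
pigeonhole argument on sets of colours yields `x < y < z < w` with `xyz` and `yzw` of the same
colour, and transitivity then joins the disjoint pairs `xy` and `zw`, which is absurd.
-/

open SimpleGraph

section OrderedColourings

variable {V : Type*} [LinearOrder V] [Fintype V]

theorem exists_lt_lt_eq_of_two_pow_card_lt {α : Type*} [Fintype α] (f : V → V → α)
    (h : 2 ^ Fintype.card α < Fintype.card V) : ∃ x y z, x < y ∧ y < z ∧ f x y = f y z := by
  by_contra! hf
  -- each `z` is determined by the set of colours of the pairs ending at `z`
  have hinj : Function.Injective fun z => {a | ∃ y < z, f y z = a} := by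
    refine Function.Injective.of_lt_imp_ne fun z z' hzz' heq => ?_
    obtain ⟨y, hyz, hy⟩ : f z z' ∈ {a | ∃ y < z, f y z = a} := heq ▸ ⟨z, hzz', rfl⟩
    exact hf y z z' hyz hzz' hy
  have := Fintype.card_le_of_injective _ hinj
  rw [Fintype.card_set] at this
  omega

theorem exists_lt_lt_lt_of_two_pow_two_pow_card_lt {β : Type*} [Fintype β]
    (P : V → V → V → β → Prop) (hP : ∀ x y z, x < y → y < z → ∃ b, P x y z b)
    (h : 2 ^ 2 ^ Fintype.card β < Fintype.card V) :
    ∃ x y z w b, x < y ∧ y < z ∧ z < w ∧ P x y z b ∧ P y z w b := by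
  obtain ⟨y, z, w, hyz, hzw, hA⟩ :=
    exists_lt_lt_eq_of_two_pow_card_lt (fun y z => {b | ∃ x < y, P x y z b})
      (by rwa [Fintype.card_set])
  obtain ⟨b, hb⟩ := hP y z w hyz hzw
  obtain ⟨x, hxy, hx⟩ : b ∈ {b | ∃ x < y, P x y z b} := hA ▸ ⟨y, hyz, hb⟩
  exact ⟨x, y, z, w, b, hxy, hyz, hzw, hx, hb⟩

end OrderedColourings

section CoInterval

variable {V : Type u} {G : SimpleGraph V}

theorem IsCoIntervalGraph.exists_endpoints (hG : IsCoIntervalGraph G) :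
    ∃ a b : V → ℝ, a ≤ b ∧ ∀ u v, G.Adj u v ↔ b u < a v ∨ b v < a u := by
  obtain ⟨I, hI, hadj⟩ := hG
  choose a b hab hI using hI
  refine ⟨a, b, hab, fun u v => ?_⟩
  rcases eq_or_ne u v with rfl | huv
  · simpa using hab u
  have := hadj u v huv
  rw [hI, hI, Set.Icc_inter_Icc, Set.nonempty_Icc, compl_adj] at this
  have := hab u
  have := hab v
  grind [sup_le_iff, le_inf_iff]

theorem IsCoIntervalGraph.induce (hG : IsCoIntervalGraph G) (s : Set V) :
    IsCoIntervalGraph (G.induce s) := by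
  obtain ⟨I, hI, hadj⟩ := hG
  refine ⟨I ∘ Subtype.val, fun v => hI v, fun u v huv => ?_⟩
  simpa [huv, Subtype.val_injective.ne huv] using hadj u v (Subtype.val_injective.ne huv)

theorem IsCoIntervalGraph.isUnionCoIntervalGraph (hG : IsCoIntervalGraph G) :
    IsUnionCoIntervalGraph G :=
  ⟨PUnit, fun _ => PUnit.unit, fun _ _ _ => rfl, fun _ => hG.induce _⟩

theorem isCoIntervalGraph_edge (s t : V) : IsCoIntervalGraph (edge s t) := by
  classical
  refine ⟨fun v => if v = s then Set.Icc 0 0 else if v = t then Set.Icc 1 1 else Set.Icc 0 1,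
    fun v => ?_, fun u v huv => ?_⟩
  · dsimp only
    split_ifs <;> exact ⟨_, _, by norm_num, rfl⟩
  · simp only [compl_adj, edge_adj]
    split_ifs <;> simp <;> grind

theorem IsUnionCoIntervalGraph.exists_isTrans_adj_iff (hG : IsUnionCoIntervalGraph G) :
    ∃ r : V → V → Prop, IsTrans V r ∧ ∀ u v, G.Adj u v ↔ r u v ∨ r v u := by
  obtain ⟨ι, c, hc, hparts⟩ := hG
  choose a b hab hadj using fun i => (hparts i).exists_endpoints
  let lo : V → ℝ := fun v => a (c v) ⟨v, rfl⟩
  let hi : V → ℝ := fun v => b (c v) ⟨v, rfl⟩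
  have hlo : ∀ i (v : {v | c v = i}), a i v = lo v := by rintro _ ⟨v, rfl⟩; rfl
  have hhi : ∀ i (v : {v | c v = i}), b i v = hi v := by rintro _ ⟨v, rfl⟩; rfl
  have hle : ∀ v, lo v ≤ hi v := fun v => hab (c v) ⟨v, rfl⟩
  have hpart : ∀ u v, c u = c v → (G.Adj u v ↔ hi u < lo v ∨ hi v < lo u) := by
    intro u v huv
    simpa only [hlo, hhi, comap_adj, Function.Embedding.coe_subtype] using
      hadj (c v) ⟨u, huv⟩ ⟨v, rfl⟩
  refine ⟨fun u v => c u = c v ∧ hi u < lo v, ⟨?_⟩, fun u v => ?_⟩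
  · rintro u v w ⟨huv, h₁⟩ ⟨hvw, h₂⟩
    exact ⟨huv.trans hvw, by linarith [hle v]⟩
  · constructor
    · intro h
      have huv := hc u v h
      rcases (hpart u v huv).1 h with h' | h'
      exacts [.inl ⟨huv, h'⟩, .inr ⟨huv.symm, h'⟩]
    · rintro (⟨huv, h⟩ | ⟨hvu, h⟩)
      exacts [(hpart u v huv).2 (.inl h), (hpart u v hvu.symm).2 (.inr h)]

end CoInterval

theorem exists_unionBoxicity_cover {V : Type u} [Finite V] (H : SimpleGraph V) :
    ∃ G : Fin (unionBoxicity H) → SimpleGraph V, (∀ i, G i ≤ Hᶜ) ∧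
      (∀ u v : V, Hᶜ.Adj u v → ∃ i, (G i).Adj u v) ∧ ∀ i, IsUnionCoIntervalGraph (G i) := by
  obtain ⟨m, ⟨e⟩⟩ := Finite.exists_equiv_fin {p : V × V // Hᶜ.Adj p.1 p.2}
  have hm : {k : ℕ | ∃ G : Fin k → SimpleGraph V, (∀ i, G i ≤ Hᶜ) ∧
      (∀ u v : V, Hᶜ.Adj u v → ∃ i, (G i).Adj u v) ∧ ∀ i, IsUnionCoIntervalGraph (G i)}.Nonempty := by
    refine ⟨m, fun i => edge (e.symm i).1.1 (e.symm i).1.2, fun i => ?_, fun u v huv => ?_,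
      fun i => (isCoIntervalGraph_edge _ _).isUnionCoIntervalGraph⟩
    · exact (edge_le_iff _).2 (.inr (e.symm i).2)
    · exact ⟨e ⟨(u, v), huv⟩, by simpa [edge_adj] using huv.ne⟩
  exact Nat.sInf_mem hm

section LineGraph

variable {n : ℕ}

def pairVertex {x y : Fin n} (h : x ≠ y) : {s : Finset (Fin n) // s.card = 2} :=
  ⟨{x, y}, Finset.card_pair h⟩

theorem lineGraphCompleteGraph_adj_pairVertex {x y z : Fin n} (hxy : x < y) (hyz : y < z) :
    (lineGraphCompleteGraph n).Adj (pairVertex hxy.ne) (pairVertex hyz.ne) := by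
  show (({x, y} : Finset (Fin n)) ∩ {y, z}).card = 1
  rw [Finset.card_eq_one]
  exact ⟨y, by ext; simp; grind⟩

theorem lineGraphCompleteGraph_not_adj_pairVertex {x y z w : Fin n} (hxy : x < y) (hyz : y < z)
    (hzw : z < w) :
    ¬ (lineGraphCompleteGraph n).Adj (pairVertex hxy.ne) (pairVertex hzw.ne) := by
  have : ({x, y} ∩ {z, w} : Finset (Fin n)) = ∅ := by ext; simp; grind
  simp [lineGraphCompleteGraph, pairVertex, this]

theorem le_two_pow_two_pow_of_lineGraphCompleteGraph_cover {ι : Type*} [Fintype ι]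
    (r : ι → {s : Finset (Fin n) // s.card = 2} → {s : Finset (Fin n) // s.card = 2} → Prop)
    (htrans : ∀ i, IsTrans _ (r i)) (hr : ∀ i u v, r i u v → (lineGraphCompleteGraph n).Adj u v)
    (hcov : ∀ u v, (lineGraphCompleteGraph n).Adj u v → ∃ i, r i u v ∨ r i v u) :
    n ≤ 2 ^ 2 ^ (2 * Fintype.card ι) := by
  by_contra! hn
  obtain ⟨x, y, z, w, ⟨i, b⟩, hxy, hyz, hzw, hxyz, hyzw⟩ :=
    exists_lt_lt_lt_of_two_pow_two_pow_card_lt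
      (fun x y z (c : ι × Bool) => ∃ (hxy : x < y) (hyz : y < z),
        cond c.2 (r c.1 (pairVertex hxy.ne) (pairVertex hyz.ne))
          (r c.1 (pairVertex hyz.ne) (pairVertex hxy.ne)))
      (fun x y z hxy hyz => by
        obtain ⟨i, h | h⟩ := hcov _ _ (lineGraphCompleteGraph_adj_pairVertex hxy hyz)
        exacts [⟨(i, true), hxy, hyz, h⟩, ⟨(i, false), hxy, hyz, h⟩])
      (by simpa [mul_comm] using hn)
  obtain ⟨_, _, h₁⟩ := hxyz
  obtain ⟨_, _, h₂⟩ := hyzw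
  apply lineGraphCompleteGraph_not_adj_pairVertex hxy hyz hzw
  cases b
  · exact (hr i _ _ ((htrans i).trans _ _ _ h₂ h₁)).symm
  · exact hr i _ _ ((htrans i).trans _ _ _ h₁ h₂)

end LineGraph

theorem stmt_12_general (k : ℕ) :
    ∃ n : ℕ, 0 < n ∧ k < unionBoxicity (lineGraphCompleteGraph n)ᶜ := by
  refine ⟨2 ^ 2 ^ (2 * k) + 1, Nat.succ_pos _, ?_⟩
  obtain ⟨G, hle, hcov, hG⟩ := exists_unionBoxicity_cover (lineGraphCompleteGraph _)ᶜ
  rw [compl_compl] at hle hcov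
  choose r htrans hr using fun i => (hG i).exists_isTrans_adj_iff
  have hn := le_two_pow_two_pow_of_lineGraphCompleteGraph_cover r htrans
    (fun i u v h => hle i ((hr i u v).2 (.inl h)))
    (fun u v h => (hcov u v h).imp fun i => (hr i u v).1)
  rw [Fintype.card_fin] at hn
  by_contra! hk
  have : 2 ^ 2 ^ (2 * k) + 1 ≤ 2 ^ 2 ^ (2 * k) := hn.trans (by gcongr <;> omega)
  omega

/-- For every positive integer `k` there is a positive integer `n`
such that the complement of the line graph of `K_n` has union boxicity greater
than `k`. -/
theorem stmt_12 (k : ℕ) (hk : 0 < k) :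
    ∃ n : ℕ, 0 < n ∧ k < unionBoxicity (lineGraphCompleteGraph n)ᶜ :=
  stmt_12_general k
end

section
/- Let k be a positive integer and let H be the complement of a perfect matching on 2k vertices, i.e., the graph on vertex set {1,…,k} × {0,1} in which (i,ε) and (j,δ) are adjacent if and only if i ≠ j. Then box(H) = k, ūbox(H) = 1, and box_ℓ(H) = 1. -/
/-!
For `H = matchingComplement k`, the complement `Hᶜ` is the perfect matching
`{(i, false), (i, true)}`. Deleting the `i`-th matching edge from the complete graph gives an
interval graph, and `H` is the intersection of these `k` graphs, so `box H ≤ k`. Conversely each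
matching edge must be a non-edge of some interval factor, and two matching edges cannot be
non-edges of the same factor: their four endpoints would induce a 4-cycle, which interval graphs
do not contain. Hence `box H = k`.

`Hᶜ` is a disjoint union of complete graphs `K₂`, which are co-interval graphs, and covering
`Hᶜ` by its `k` edges uses every vertex exactly once; as `Hᶜ` has an edge when `k ≥ 1`, both the
union boxicity and the local boxicity equal `1`.
-/

universe u

/-- The complement of a perfect matching on `2k` vertices: vertices `(i, ε)` and
`(j, δ)` are adjacent iff `i ≠ j`. -/
def matchingComplement (k : ℕ) : SimpleGraph (Fin k × Bool) where
  Adj a b := a.1 ≠ b.1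
  symm := ⟨fun _ _ h => h.symm⟩
  loopless := ⟨fun _ h => h rfl⟩

open SimpleGraph

theorem Set.Icc_inter_Icc_nonempty_iff {α : Type*} [LinearOrder α] {a₁ b₁ a₂ b₂ : α}
    (h₁ : a₁ ≤ b₁) (h₂ : a₂ ≤ b₂) :
    (Set.Icc a₁ b₁ ∩ Set.Icc a₂ b₂).Nonempty ↔ a₁ ≤ b₂ ∧ a₂ ≤ b₁ := by
  rw [Set.Icc_inter_Icc, Set.nonempty_Icc]
  simp [h₁, h₂, and_comm]

theorem IsIntervalGraph.adj_or_adj_of_forall_adj {V : Type*} {G : SimpleGraph V}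
    (hG : IsIntervalGraph G) {a₁ a₂ b₁ b₂ : V} (ha : a₁ ≠ a₂) (hb : b₁ ≠ b₂)
    (h₁₁ : G.Adj a₁ b₁) (h₁₂ : G.Adj a₁ b₂) (h₂₁ : G.Adj a₂ b₁) (h₂₂ : G.Adj a₂ b₂) :
    G.Adj a₁ a₂ ∨ G.Adj b₁ b₂ := by
  obtain ⟨I, hI, hadj⟩ := hG
  choose l r hlr hI using hI
  have key : ∀ {u v}, u ≠ v → (G.Adj u v ↔ l u ≤ r v ∧ l v ≤ r u) := fun huv => by
    rw [hadj _ _ huv, hI, hI, Set.Icc_inter_Icc_nonempty_iff (hlr _) (hlr _)]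
  rw [key h₁₁.ne] at h₁₁
  rw [key h₁₂.ne] at h₁₂
  rw [key h₂₁.ne] at h₂₁
  rw [key h₂₂.ne] at h₂₂
  rw [key ha, key hb]
  -- Disjoint intervals are ordered; if `a₁` lies left of `a₂` and `b₁` left of `b₂`, then
  -- `l b₂ ≤ r a₁ < l a₂ ≤ r b₁ < l b₂`, and the other cases are symmetric.
  by_contra! ⟨ha', hb'⟩
  rcases le_or_gt (l a₁) (r a₂) with h₁ | h₁ <;> rcases le_or_gt (l b₁) (r b₂) with h₂ | h₂
  all_goals grind

theorem isIntervalGraph_top_sdiff_edge {V : Type*} (x y : V) :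
    IsIntervalGraph ((⊤ : SimpleGraph V) \ edge x y) := by
  classical
  refine ⟨fun v => Set.Icc (if v = y ∧ v ≠ x then 1 else 0) (if v = x then 0 else 1),
    fun v => ⟨_, _, ?_, rfl⟩, fun u v huv => ?_⟩
  · split_ifs <;> simp_all
  · rw [sdiff_adj, edge_adj, Set.Icc_inter_Icc, Set.nonempty_Icc]
    split_ifs <;> simp_all

theorem isIntervalGraph_bot (V : Type*) [Countable V] : IsIntervalGraph (⊥ : SimpleGraph V) := by
  obtain ⟨f, hf⟩ := exists_injective_nat V
  refine ⟨fun v => Set.Icc (f v : ℝ) (f v), fun v => ⟨_, _, le_rfl, rfl⟩, fun u v huv => ?_⟩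
  simp [Set.Icc_self, hf.ne huv]

theorem isCoIntervalGraph_top (V : Type*) [Countable V] :
    IsCoIntervalGraph (⊤ : SimpleGraph V) := by
  rw [IsCoIntervalGraph, compl_top]
  exact isIntervalGraph_bot V

theorem SimpleGraph.induce_support_edge {V : Type*} (x y : V) :
    (edge x y).induce (edge x y).support = ⊤ := by
  ext ⟨a, a', ha⟩ ⟨b, b', hb⟩
  simp only [comap_adj, Function.Embedding.subtype_apply, top_adj, ne_eq, edge_adj] at ha hb ⊢
  grind

namespace matchingComplement

variable {k : ℕ}

theorem adj_iff {u v : Fin k × Bool} : (matchingComplement k).Adj u v ↔ u.1 ≠ v.1 := Iff.rfl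

theorem compl_adj {u v : Fin k × Bool} :
    (matchingComplement k)ᶜ.Adj u v ↔ u ≠ v ∧ u.1 = v.1 := by
  simp [matchingComplement, SimpleGraph.compl_adj]

theorem compl_adj_iff_edge {u v : Fin k × Bool} :
    (matchingComplement k)ᶜ.Adj u v ↔ ∃ i, (edge (i, false) (i, true)).Adj u v := by
  rw [compl_adj]
  rcases u with ⟨i, _ | _⟩ <;> rcases v with ⟨j, _ | _⟩ <;> simp [edge_adj] <;> grind

theorem adj_iff_forall {u v : Fin k × Bool} (huv : u ≠ v) :
    (matchingComplement k).Adj u v ↔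
      ∀ i, ((⊤ : SimpleGraph _) \ edge (i, false) (i, true)).Adj u v := by
  simp only [sdiff_adj, top_adj, huv, ne_eq, not_false_eq_true, true_and]
  rw [← not_exists, ← compl_adj_iff_edge, SimpleGraph.compl_adj]
  simp [huv]

theorem le_of_adj_iff_forall {d : ℕ} (G : Fin d → SimpleGraph (Fin k × Bool))
    (hG : ∀ j, IsIntervalGraph (G j))
    (hH : ∀ u v, u ≠ v → ((matchingComplement k).Adj u v ↔ ∀ j, (G j).Adj u v)) : k ≤ d := by
  have hne (i : Fin k) : ((i, false) : Fin k × Bool) ≠ (i, true) := by simp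
  have hsep (i : Fin k) : ∃ j, ¬(G j).Adj (i, false) (i, true) := by
    simpa using (hH _ _ (hne i)).not.1 fun h => h rfl
  choose j hj using hsep
  by_contra! hdk
  obtain ⟨i, i', hii', hji⟩ := Fintype.exists_ne_map_eq_of_card_lt j (by simpa using hdk)
  have hcross (p q : Bool) : (G (j i)).Adj (i, p) (i', q) :=
    (hH _ _ fun h => hii' (congrArg Prod.fst h)).1 (adj_iff.2 hii') (j i)
  rcases IsIntervalGraph.adj_or_adj_of_forall_adj (hG (j i)) (hne i) (hne i')
    (hcross _ _) (hcross _ _) (hcross _ _) (hcross _ _) with h | h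
  · exact hj i h
  · exact hj i' (hji ▸ h)

theorem boxicity_eq : boxicity (matchingComplement k) = k :=
  IsLeast.csInf_eq
    ⟨⟨fun i => ⊤ \ edge (i, false) (i, true), fun _ => isIntervalGraph_top_sdiff_edge _ _,
      fun _ _ => adj_iff_forall⟩,
    fun _ ⟨G, hG, hH⟩ => le_of_adj_iff_forall G hG hH⟩

theorem isUnionCoIntervalGraph_compl : IsUnionCoIntervalGraph (matchingComplement k)ᶜ := by
  refine ⟨Fin k, Prod.fst, fun u v huv => (compl_adj.1 huv).2, fun i => ?_⟩
  have : (matchingComplement k)ᶜ.induce {v | v.1 = i} = ⊤ := by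
    ext ⟨a, ha : a.1 = i⟩ ⟨b, hb : b.1 = i⟩
    simp [adj_iff, ha, hb]
  rw [this]
  exact isCoIntervalGraph_top _

theorem localCoverLE_one : LocalCoverLE (matchingComplement k) 1 := by
  refine ⟨k, fun i => edge (i, false) (i, true), fun i u v h => compl_adj_iff_edge.2 ⟨i, h⟩,
    fun u v h => compl_adj_iff_edge.1 h, fun i => ?_, fun v => ?_⟩
  · rw [induce_support_edge]
    exact isCoIntervalGraph_top _
  · calc _ ≤ ({v.1} : Set (Fin k)).ncard := Set.ncard_le_ncard ?_ (Set.toFinite _)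
      _ = 1 := Set.ncard_singleton _
    intro i hi
    obtain ⟨w, hw⟩ := (mem_support _).1 hi
    rw [edge_adj] at hw
    grind

end matchingComplement

theorem unionBoxicity_eq_one {V : Type u} {H : SimpleGraph V} {u v : V} (huv : Hᶜ.Adj u v)
    (hH : IsUnionCoIntervalGraph Hᶜ) : unionBoxicity H = 1 :=
  IsLeast.csInf_eq ⟨⟨fun _ => Hᶜ, fun _ => le_rfl, fun _ _ h => ⟨0, h⟩, fun _ => hH⟩,
    fun _ ⟨_, _, hcov, _⟩ => (hcov u v huv).choose.pos⟩

theorem localBoxicity_eq_one {V : Type u} {H : SimpleGraph V} {u v : V} (huv : Hᶜ.Adj u v)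
    (hH : LocalCoverLE H 1) : localBoxicity H = 1 := by
  refine IsLeast.csInf_eq ⟨hH, fun s ⟨t, G, _, hcov, _, hcard⟩ => ?_⟩
  obtain ⟨i, hi⟩ := hcov u v huv
  calc 1 ≤ {i : Fin t | u ∈ (G i).support}.ncard := (Set.ncard_pos (Set.toFinite _)).2 ⟨i, v, hi⟩
    _ ≤ s := hcard u

/-- For the complement `H` of a perfect matching on `2k` vertices
(`k ≥ 1`) we have `box(H) = k`, `ūbox(H) = 1` and `box_ℓ(H) = 1`. -/
theorem stmt_13 (k : ℕ) (hk : 0 < k) :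
    boxicity (matchingComplement k) = k ∧
    unionBoxicity (matchingComplement k) = 1 ∧
    localBoxicity (matchingComplement k) = 1 := by
  have hedge : (matchingComplement k)ᶜ.Adj (⟨0, hk⟩, false) (⟨0, hk⟩, true) :=
    matchingComplement.compl_adj.2 ⟨by simp, rfl⟩
  exact ⟨matchingComplement.boxicity_eq,
    unionBoxicity_eq_one hedge matchingComplement.isUnionCoIntervalGraph_compl,
    localBoxicity_eq_one hedge matchingComplement.localCoverLE_one⟩
end

section
/- Let H be a finite simple graph and d a positive integer. Then H admits a 1-local d-dimensional box representation if and only if the vertex set of H can be partitioned into d (possibly empty) parts V_1, …, V_d such that every edge of the complement Hᶜ joins two vertices of the same part and for each i the restriction of Hᶜ to V_i is a co-interval graph (i.e., Hᶜ is the vertex-disjoint union of d co-interval graphs). -/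
/-!
In a 1-local box representation, let `c v` be the coordinate of the (at most one) bounded
factor of the box of `v`. Two such boxes are disjoint exactly when `c u = c v` and their
`c u`-th factors are disjoint. Hence the non-edges of `H` stay inside the parts of `c`, and on
each part the bounded factors represent `H` as an interval graph, once unbounded factors are
replaced by a long enough interval (`H` is finite). Conversely, interval representations of `H`
on the parts, each placed in its own coordinate, give a 1-local box representation.
-/

universe u

/-- A `k`-local `d`-dimensional box representation of `H`: each vertex `v` gets a box
`B v = J v 0 × ⋯ × J v (d-1) ⊆ ℝ^d` where each factor is either all of `ℝ` or a
nonempty closed bounded interval, at most `k` factors differ from `ℝ`, and two distinct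
vertices are adjacent in `H` iff their boxes intersect. -/
def HasLocalBoxRep {V : Type u} (H : SimpleGraph V) (k d : ℕ) : Prop :=
  ∃ J : V → Fin d → Set ℝ,
    (∀ (v : V) (i : Fin d), J v i = Set.univ ∨ ∃ a b : ℝ, a ≤ b ∧ J v i = Set.Icc a b) ∧
    (∀ v : V, {i : Fin d | J v i ≠ Set.univ}.ncard ≤ k) ∧
    ∀ u v : V, u ≠ v → (H.Adj u v ↔
      ({p : Fin d → ℝ | ∀ i, p i ∈ J u i} ∩ {p : Fin d → ℝ | ∀ i, p i ∈ J v i}).Nonempty)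


namespace SimpleGraph

variable {V : Type*}

lemma compl_induce_compl (G : SimpleGraph V) (s : Set V) : (Gᶜ.induce s)ᶜ = G.induce s := by
  ext u v
  simp only [compl_adj, comap_adj, Function.Embedding.coe_subtype, ne_eq, Subtype.ext_iff]
  have : G.Adj u v → (u : V) ≠ v := G.ne_of_adj
  tauto

lemma isCoIntervalGraph_compl_induce_iff (G : SimpleGraph V) (s : Set V) :
    IsCoIntervalGraph (Gᶜ.induce s) ↔ IsIntervalGraph (G.induce s) := by
  rw [IsCoIntervalGraph, compl_induce_compl]

end SimpleGraph

theorem nonempty_of_eq_univ_or_Icc {α : Type*} [Preorder α] [Nonempty α] {s : Set α}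
    (hs : s = Set.univ ∨ ∃ a b : α, a ≤ b ∧ s = Set.Icc a b) : s.Nonempty := by
  rcases hs with h | ⟨a, b, hab, h⟩
  · exact h ▸ Set.univ_nonempty
  · exact h ▸ Set.nonempty_Icc.2 hab

theorem isIntervalGraph_of_univ_or_Icc {W : Type*} [Finite W] (G : SimpleGraph W)
    (I : W → Set ℝ) (hI : ∀ v, I v = Set.univ ∨ ∃ a b : ℝ, a ≤ b ∧ I v = Set.Icc a b)
    (hG : ∀ u v : W, u ≠ v → (G.Adj u v ↔ (I u ∩ I v).Nonempty)) : IsIntervalGraph G := by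
  choose x hx using fun v => nonempty_of_eq_univ_or_Icc (hI v)
  obtain ⟨lo, hlo⟩ := (Set.finite_range x).bddBelow
  obtain ⟨hi, hhi⟩ := (Set.finite_range x).bddAbove
  have hx_mem : ∀ v, x v ∈ Set.Icc lo hi := fun v =>
    ⟨hlo (Set.mem_range_self v), hhi (Set.mem_range_self v)⟩
  -- a copy of `ℝ` meets every interval, and so does `[lo, hi]`, which contains a point of each
  let I' : W → Set ℝ := fun v => if I v = Set.univ then Set.Icc lo hi else I v
  have hinter : ∀ u v, (I' u ∩ I' v).Nonempty ↔ (I u ∩ I v).Nonempty := fun u v => by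
    by_cases hu : I u = Set.univ <;> by_cases hv : I v = Set.univ <;>
      simp only [I', hu, hv, if_true, if_false, Set.univ_inter, Set.inter_univ]
    · exact iff_of_true ⟨x u, hx_mem u, hx_mem u⟩ Set.univ_nonempty
    · exact iff_of_true ⟨x v, hx_mem v, hx v⟩ ⟨x v, hx v⟩
    · exact iff_of_true ⟨x u, hx u, hx_mem u⟩ ⟨x u, hx u⟩
  refine ⟨I', fun v => ?_, fun u v huv => (hG u v huv).trans (hinter u v).symm⟩
  by_cases hv : I v = Set.univ
  · exact ⟨lo, hi, (hx_mem v).1.trans (hx_mem v).2, if_pos hv⟩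
  · obtain ⟨a, b, hab, h⟩ := (hI v).resolve_left hv
    exact ⟨a, b, hab, (if_neg hv).trans h⟩

theorem Set.Subsingleton.exists_subset_singleton {α : Type*} [Nonempty α] {s : Set α}
    (hs : s.Subsingleton) : ∃ a, s ⊆ {a} := by
  rcases hs.eq_empty_or_singleton with h | ⟨a, h⟩
  · exact ⟨Classical.arbitrary α, h ▸ Set.empty_subset _⟩
  · exact ⟨a, h.le⟩

theorem setOf_forall_mem_inter_nonempty_iff {ι α : Type*} (A B : ι → Set α) :
    ({p : ι → α | ∀ j, p j ∈ A j} ∩ {p | ∀ j, p j ∈ B j}).Nonempty ↔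
      ∀ j, (A j ∩ B j).Nonempty :=
  ⟨fun ⟨p, hA, hB⟩ j => ⟨p j, hA j, hB j⟩, fun h => by
    choose p hp using h
    exact ⟨p, fun j => (hp j).1, fun j => (hp j).2⟩⟩

theorem box_inter_nonempty_iff_of_eq_univ {ι α : Type*} {A B : ι → Set α} {i k : ι}
    (hA : ∀ j, (A j).Nonempty) (hB : ∀ j, (B j).Nonempty)
    (hAi : ∀ j, j ≠ i → A j = Set.univ) (hBk : ∀ j, j ≠ k → B j = Set.univ) :
    ({p : ι → α | ∀ j, p j ∈ A j} ∩ {p | ∀ j, p j ∈ B j}).Nonempty ↔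
      (i = k → (A i ∩ B i).Nonempty) := by
  rw [setOf_forall_mem_inter_nonempty_iff]
  refine ⟨fun h _ => h i, fun h j => ?_⟩
  by_cases hji : j = i
  · by_cases hjk : j = k
    · subst hji hjk; exact h rfl
    · simpa [hBk j hjk] using hA j
  · simpa [hAi j hji] using hB j

open SimpleGraph

theorem exists_partition_of_hasLocalBoxRep_one {V : Type u} [Finite V] {H : SimpleGraph V}
    {d : ℕ} (hd : 0 < d) (hH : HasLocalBoxRep H 1 d) :
    ∃ c : V → Fin d, (∀ u v : V, Hᶜ.Adj u v → c u = c v) ∧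
      ∀ i : Fin d, IsCoIntervalGraph (Hᶜ.induce {v | c v = i}) := by
  obtain ⟨J, hJ, hcard, hadj⟩ := hH
  have : Nonempty (Fin d) := ⟨⟨0, hd⟩⟩
  have hne : ∀ v j, (J v j).Nonempty := fun v j => nonempty_of_eq_univ_or_Icc (hJ v j)
  choose c hc using fun v =>
    (Set.ncard_le_one_iff_subsingleton.1 (hcard v)).exists_subset_singleton
  have hc_univ : ∀ v j, j ≠ c v → J v j = Set.univ := fun v j hj =>
    by_contra fun h => hj (hc v h)
  have hadj_iff : ∀ u v, u ≠ v → (H.Adj u v ↔ (c u = c v → (J u (c u) ∩ J v (c u)).Nonempty)) :=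
    fun u v huv => (hadj u v huv).trans
      (box_inter_nonempty_iff_of_eq_univ (hne u) (hne v) (hc_univ u) (hc_univ v))
  refine ⟨c, fun u v huv => ?_, fun i => ?_⟩
  · rw [compl_adj] at huv
    by_contra hcuv
    exact huv.2 ((hadj_iff u v huv.1).2 (absurd · hcuv))
  · rw [isCoIntervalGraph_compl_induce_iff]
    refine isIntervalGraph_of_univ_or_Icc _ (fun w => J w i) (fun w => hJ w i) fun u v huv => ?_
    have hu : c u = i := u.2
    have hv : c v = i := v.2
    rw [comap_adj, Function.Embedding.coe_subtype, hadj_iff u v (Subtype.coe_ne_coe.2 huv), hu, hv]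
    exact ⟨fun h => h rfl, fun h _ => h⟩

theorem hasLocalBoxRep_one_of_partition {V : Type u} {H : SimpleGraph V} {d : ℕ}
    (c : V → Fin d) (hc : ∀ u v : V, Hᶜ.Adj u v → c u = c v)
    (hparts : ∀ i : Fin d, IsCoIntervalGraph (Hᶜ.induce {v | c v = i})) :
    HasLocalBoxRep H 1 d := by
  simp only [isCoIntervalGraph_compl_induce_iff] at hparts
  choose I hI hadj using hparts
  let J : V → Fin d → Set ℝ := fun v j => if h : c v = j then I j ⟨v, h⟩ else Set.univ
  have hJ_univ : ∀ v j, j ≠ c v → J v j = Set.univ := fun v j hj => dif_neg (Ne.symm hj)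
  have hJ_part : ∀ v j (h : c v = j), J v j = I j ⟨v, h⟩ := fun v j h => dif_pos h
  have hJ : ∀ v j, J v j = Set.univ ∨ ∃ a b : ℝ, a ≤ b ∧ J v j = Set.Icc a b := fun v j => by
    by_cases h : c v = j
    · exact .inr (hJ_part v j h ▸ hI j ⟨v, h⟩)
    · exact .inl (hJ_univ v j (Ne.symm h))
  have hne : ∀ v j, (J v j).Nonempty := fun v j => nonempty_of_eq_univ_or_Icc (hJ v j)
  refine ⟨J, hJ, fun v => ?_, fun u v huv => ?_⟩
  · calc {j | J v j ≠ Set.univ}.ncard ≤ ({c v} : Set (Fin d)).ncard :=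
          Set.ncard_le_ncard (fun j hj => by_contra fun h => hj (hJ_univ v j h))
      _ = 1 := Set.ncard_singleton _
  · rw [box_inter_nonempty_iff_of_eq_univ (hne u) (hne v) (hJ_univ u) (hJ_univ v)]
    by_cases hcuv : c u = c v
    · have h := hadj (c u) ⟨u, rfl⟩ ⟨v, hcuv.symm⟩ (by simpa using huv)
      rw [comap_adj, Function.Embedding.coe_subtype] at h
      rw [h, hJ_part u _ rfl, hJ_part v _ hcuv.symm]
      exact ⟨fun h _ => h, fun h => h hcuv⟩
    · exact iff_of_true (by_contra fun h => hcuv (hc u v ((compl_adj H u v).2 ⟨huv, h⟩)))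
        (absurd · hcuv)

/-- A finite graph `H` admits a 1-local `d`-dimensional box
representation iff its vertex set can be partitioned into `d` (possibly empty) parts so
that every edge of `Hᶜ` joins two vertices of the same part and the restriction of `Hᶜ`
to each part is a co-interval graph. -/
theorem stmt_14 {V : Type} [Fintype V] (H : SimpleGraph V) (d : ℕ) (hd : 0 < d) :
    HasLocalBoxRep H 1 d ↔
    ∃ c : V → Fin d,
      (∀ u v : V, Hᶜ.Adj u v → c u = c v) ∧
      ∀ i : Fin d, IsCoIntervalGraph (Hᶜ.induce {v | c v = i}) :=
  ⟨exists_partition_of_hasLocalBoxRep_one hd,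
    fun ⟨c, hc, hparts⟩ => hasLocalBoxRep_one_of_partition c hc hparts⟩
end

section
/- Let H be a finite simple graph and k ≥ 2 an integer. If H admits a coloring of its vertices with k colors such that adjacent vertices receive different colors and for any two colors the subgraph of H induced by the vertices of those two colors contains no cycle (an acyclic coloring with k colors), then box_ℓ(H) ≤ 2(k−1). -/
universe u

/-!
Two colour classes induce a forest, and a finite forest is the intersection of two interval
graphs: one recording depths (adjacent iff the depths differ by at most one), the other
nesting each vertex's interval inside a part of its parent's interval reserved for it, so that
among vertices of nearby depths only parent and child meet. For each pair of colours and each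
of these two interval graphs, the non-edges of the interval graph inside the two colour classes
form a co-interval graph contained in `Hᶜ`. Any two vertices lie in a common pair of colour
classes, so these graphs cover `Hᶜ`, and a vertex of colour `i` belongs only to the `2(k - 1)`
graphs coming from pairs containing `i`.
-/

open Set Function

theorem IsIntervalGraph.of_embedding {V W : Type*} {G : SimpleGraph V} {G' : SimpleGraph W}
    (hG : IsIntervalGraph G) (f : W ↪ V) (h : ∀ u v, u ≠ v → (G'.Adj u v ↔ G.Adj (f u) (f v))) :
    IsIntervalGraph G' := by
  obtain ⟨I, hI, hadj⟩ := hG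
  exact ⟨I ∘ f, fun v => hI (f v), fun u v huv =>
    (h u v huv).trans (hadj _ _ (f.injective.ne huv))⟩

theorem exists_disjoint_Icc_subset_Icc {p q : ℝ} (h : p < q) :
    ∃ a b a' b' : ℝ, a < b ∧ a' < b' ∧ Icc a b ⊆ Icc p q ∧ Icc a' b' ⊆ Icc p q ∧
      Disjoint (Icc a b) (Icc a' b') := by
  refine ⟨p, p + (q - p) / 3, q - (q - p) / 3, q, by linarith, by linarith,
    Icc_subset_Icc le_rfl (by linarith), Icc_subset_Icc (by linarith) le_rfl, ?_⟩
  rw [disjoint_left]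
  rintro x ⟨-, hx⟩ ⟨hx', -⟩
  linarith

theorem Icc_natCast_inter_nonempty_iff {m n : ℕ} :
    (Icc (m : ℝ) (m + 1) ∩ Icc (n : ℝ) (n + 1)).Nonempty ↔ m ≤ n + 1 ∧ n ≤ m + 1 := by
  rw [Icc_inter_Icc, nonempty_Icc, max_le_iff, le_min_iff, le_min_iff]
  constructor
  · rintro ⟨⟨-, h₁⟩, h₂, -⟩
    exact ⟨by exact_mod_cast h₁, by exact_mod_cast h₂⟩
  · rintro ⟨h₁, h₂⟩
    exact ⟨⟨by linarith, by exact_mod_cast h₁⟩, by exact_mod_cast h₂, by linarith⟩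

namespace SimpleGraph

variable {V W : Type*}

def intersectionGraph (I : W → Set ℝ) : SimpleGraph W where
  Adj u v := u ≠ v ∧ (I u ∩ I v).Nonempty
  symm := ⟨fun _ _ h => ⟨h.1.symm, inter_comm _ _ ▸ h.2⟩⟩
  loopless := ⟨fun _ h => h.1 rfl⟩

theorem isIntervalGraph_intersectionGraph {I : W → Set ℝ}
    (hI : ∀ v, ∃ a b, a ≤ b ∧ I v = Icc a b) : IsIntervalGraph (intersectionGraph I) :=
  ⟨I, hI, fun _ _ huv => ⟨And.right, fun h => ⟨huv, h⟩⟩⟩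

theorem IsAcyclic.exists_neighborSet_subsingleton [Finite V] [Nonempty V] {G : SimpleGraph V}
    (hG : G.IsAcyclic) : ∃ v, (G.neighborSet v).Subsingleton := by
  obtain ⟨u, v, p, hp, hmax⟩ := Walk.exists_isPath_forall_isPath_length_le_length G
  -- every neighbour of `u` lies on the longest path `p`, hence is its second vertex
  have hsnd : ∀ w ∈ G.neighborSet u, w = p.snd := fun w huw =>
    hG.eq_snd_of_adj_start hp huw <| by
      by_contra hw
      simpa using hmax _ _ (p.cons (G.adj_symm huw)) (hp.cons hw)
  exact ⟨u, fun w hw w' hw' => (hsnd w hw).trans (hsnd w' hw').symm⟩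

theorem IsAcyclic.exists_mem_forall_adj_eq {G : SimpleGraph V} (hG : G.IsAcyclic)
    {s : Finset V} (hs : s.Nonempty) :
    ∃ w ∈ s, ∀ x ∈ s, ∀ y ∈ s, G.Adj w x → G.Adj w y → x = y := by
  have : Nonempty (s : Set V) := hs.to_set.to_subtype
  obtain ⟨⟨w, hw⟩, hsub⟩ := (hG.induce (s : Set V)).exists_neighborSet_subsingleton
  exact ⟨w, hw, fun x hx y hy hwx hwy =>
    congrArg Subtype.val (hsub (x := ⟨x, hx⟩) hwx (y := ⟨y, hy⟩) hwy)⟩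

theorem ncard_setOf_mem_edgeSet_top [Fintype V] (a : V) :
    {e : (⊤ : SimpleGraph V).edgeSet | a ∈ (e : Sym2 V)}.ncard = Fintype.card V - 1 := by
  classical
  have : {e : (⊤ : SimpleGraph V).edgeSet | a ∈ (e : Sym2 V)} =
      Subtype.val ⁻¹' (⊤ : SimpleGraph V).incidenceSet a := by
    ext e
    exact ⟨fun h => ⟨e.2, h⟩, And.right⟩
  rw [this, Set.ncard_preimage_of_injective_subset_range Subtype.val_injective
      fun e he => ⟨⟨e, he.1⟩, rfl⟩,
    Set.ncard_eq_toFinset_card', ← incidenceFinset, card_incidenceFinset_eq_degree,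
    complete_graph_degree]

theorem exists_mem_edgeSet_top [Nontrivial V] (a b : V) :
    ∃ e ∈ (⊤ : SimpleGraph V).edgeSet, a ∈ e ∧ b ∈ e := by
  rcases eq_or_ne a b with rfl | hab
  · obtain ⟨c, hc⟩ := exists_ne a
    exact ⟨s(a, c), by simpa using hc.symm, Sym2.mem_mk_left _ _, Sym2.mem_mk_left _ _⟩
  · exact ⟨s(a, b), by simpa using hab, Sym2.mem_mk_left _ _, Sym2.mem_mk_right _ _⟩

/-- Invariant of the leaf-by-leaf construction of a two-interval representation of a forest
`F` on `s`: `u ≠ v` are adjacent iff `I u`, `I v` meet and their depths differ by at most one.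
`P v ⊆ I v` meets the interval of no other vertex of depth at least `depth v`, so a new child
of `v` can be placed there; `R` meets no interval at all, so a new root can be placed there. -/
structure IsForestRep (F : SimpleGraph W) (s : Finset W) (I P : W → Set ℝ) (R : Set ℝ)
    (depth : W → ℕ) : Prop where
  I_eq_Icc : ∀ v ∈ s, ∃ a b, a ≤ b ∧ I v = Icc a b
  P_eq_Icc : ∀ v ∈ s, ∃ a b, a < b ∧ P v = Icc a b
  R_eq_Icc : ∃ a b, a < b ∧ R = Icc a b
  P_subset_I : ∀ v ∈ s, P v ⊆ I v
  disjoint_R_I : ∀ v ∈ s, Disjoint R (I v)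
  disjoint_P_I : ∀ u ∈ s, ∀ v ∈ s, u ≠ v → depth u ≤ depth v → Disjoint (P u) (I v)
  adj_iff : ∀ u ∈ s, ∀ v ∈ s, u ≠ v →
    (F.Adj u v ↔ (I u ∩ I v).Nonempty ∧ depth u ≤ depth v + 1 ∧ depth v ≤ depth u + 1)

namespace IsForestRep

variable {F : SimpleGraph W} {s : Finset W} {I P : W → Set ℝ} {R : Set ℝ} {d : W → ℕ}

theorem disjoint_P_P (h : IsForestRep F s I P R d) {u v : W} (hu : u ∈ s) (hv : v ∈ s)
    (huv : u ≠ v) : Disjoint (P u) (P v) := by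
  rcases le_total (d u) (d v) with hd | hd
  · exact (h.disjoint_P_I u hu v hv huv hd).mono_right (h.P_subset_I v hv)
  · exact ((h.disjoint_P_I v hv u hu huv.symm hd).mono_right (h.P_subset_I u hu)).symm

theorem extend [DecidableEq W] (h : IsForestRep F s I P R d) {w : W} (hw : w ∉ s)
    {J R' : Set ℝ} {P' : W → Set ℝ} {dw : ℕ}
    (hJ : ∃ a b, a < b ∧ J = Icc a b) (hP' : ∀ v ∈ s, ∃ a b, a < b ∧ P' v = Icc a b)
    (hP'P : ∀ v ∈ s, P' v ⊆ P v) (hR' : ∃ a b, a < b ∧ R' = Icc a b) (hR'R : R' ⊆ R)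
    (hR'J : Disjoint R' J) (hJI : ∀ v ∈ s, dw ≤ d v → Disjoint J (I v))
    (hP'J : ∀ v ∈ s, d v ≤ dw → Disjoint (P' v) J)
    (hadj : ∀ v ∈ s, F.Adj w v ↔ (J ∩ I v).Nonempty ∧ dw ≤ d v + 1 ∧ d v ≤ dw + 1) :
    IsForestRep F (insert w s) (update I w J) (update P' w J) R' (update d w dw) := by
  have hne : ∀ v ∈ s, v ≠ w := fun v hv hvw => hw (hvw ▸ hv)
  have hJ' : ∃ a b, a ≤ b ∧ J = Icc a b := by
    obtain ⟨a, b, hab, rfl⟩ := hJ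
    exact ⟨a, b, hab.le, rfl⟩
  refine ⟨?_, ?_, hR', ?_, ?_, ?_, ?_⟩ <;> simp only [Finset.forall_mem_insert, update_self]
  · exact ⟨hJ', fun v hv => by simpa [update_of_ne (hne v hv)] using h.I_eq_Icc v hv⟩
  · exact ⟨hJ, fun v hv => by simpa [update_of_ne (hne v hv)] using hP' v hv⟩
  · exact ⟨subset_rfl, fun v hv => by
      simpa [update_of_ne (hne v hv)] using (hP'P v hv).trans (h.P_subset_I v hv)⟩
  · exact ⟨hR'J, fun v hv => by
      simpa [update_of_ne (hne v hv)] using (h.disjoint_R_I v hv).mono_left hR'R⟩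
  · refine ⟨⟨fun hww => absurd rfl hww, fun v hv _ => ?_⟩, fun u hu => ⟨fun _ => ?_, fun v hv huv => ?_⟩⟩
    · simpa [update_of_ne (hne v hv)] using hJI v hv
    · simpa [update_of_ne (hne u hu)] using hP'J u hu
    · simpa [update_of_ne (hne u hu), update_of_ne (hne v hv)] using
        fun hd => (h.disjoint_P_I u hu v hv huv hd).mono_left (hP'P u hu)
  · refine ⟨⟨fun hww => absurd rfl hww, fun v hv _ => ?_⟩, fun u hu => ⟨fun _ => ?_, fun v hv huv => ?_⟩⟩
    · simpa [update_of_ne (hne v hv)] using hadj v hv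
    · rw [update_of_ne (hne u hu), update_of_ne (hne u hu), F.adj_comm, hadj u hu, inter_comm,
        and_comm (a := d u ≤ dw + 1)]
    · simpa [update_of_ne (hne u hu), update_of_ne (hne v hv)] using h.adj_iff u hu v hv huv

theorem exists_insert_of_isolated [DecidableEq W] (h : IsForestRep F s I P R d) {w : W} (hw : w ∉ s)
    (hiso : ∀ v ∈ s, ¬F.Adj w v) :
    ∃ I' P' R' d', IsForestRep F (insert w s) I' P' R' d' := by
  obtain ⟨p, q, hpq, hR⟩ := h.R_eq_Icc
  obtain ⟨a, b, a', b', hab, hab', hsub, hsub', hdisj⟩ := exists_disjoint_Icc_subset_Icc hpq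
  rw [← hR] at hsub hsub'
  have hJI : ∀ v ∈ s, Disjoint (Icc a' b') (I v) :=
    fun v hv => (h.disjoint_R_I v hv).mono_left hsub'
  exact ⟨_, _, _, _, h.extend hw ⟨a', b', hab', rfl⟩ h.P_eq_Icc (fun _ _ => subset_rfl)
    ⟨a, b, hab, rfl⟩ hsub hdisj (fun v hv _ => hJI v hv)
    (fun v hv _ => ((hJI v hv).mono_right (h.P_subset_I v hv)).symm)
    (fun v hv => iff_of_false (hiso v hv) fun h' => h'.1.not_disjoint (hJI v hv))
    (dw := 0)⟩

theorem exists_insert_of_leaf [DecidableEq W] (h : IsForestRep F s I P R d) {w u : W} (hw : w ∉ s)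
    (hu : u ∈ s) (hwu : F.Adj w u) (hleaf : ∀ v ∈ s, F.Adj w v → v = u) :
    ∃ I' P' R' d', IsForestRep F (insert w s) I' P' R' d' := by
  obtain ⟨p, q, hpq, hP⟩ := h.P_eq_Icc u hu
  obtain ⟨a, b, a', b', hab, hab', hsub, hsub', hdisj⟩ := exists_disjoint_Icc_subset_Icc hpq
  rw [← hP] at hsub hsub'
  -- the new leaf gets the right part of the private part of `u`, which keeps the left part
  have hJI : ∀ v ∈ s, v ≠ u → d u ≤ d v → Disjoint (Icc a' b') (I v) :=
    fun v hv hvu hd => (h.disjoint_P_I u hu v hv hvu.symm hd).mono_left hsub'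
  refine ⟨_, _, _, _, h.extend hw (P' := update P u (Icc a b)) (dw := d u + 1)
    ⟨a', b', hab', rfl⟩ ?_ ?_ h.R_eq_Icc subset_rfl
    ((h.disjoint_R_I u hu).mono_right (hsub'.trans (h.P_subset_I u hu)))
    (fun v hv hd => hJI v hv (by rintro rfl; omega) (by omega)) ?_ ?_⟩
  · intro v hv
    rcases eq_or_ne v u with rfl | hvu
    · exact ⟨a, b, hab, update_self ..⟩
    · rw [update_of_ne hvu]; exact h.P_eq_Icc v hv
  · intro v hv
    rcases eq_or_ne v u with rfl | hvu
    · rw [update_self]; exact hsub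
    · rw [update_of_ne hvu]
  · intro v hv _
    rcases eq_or_ne v u with rfl | hvu
    · rw [update_self]; exact hdisj
    · rw [update_of_ne hvu]; exact (h.disjoint_P_P hv hu hvu).mono_right hsub'
  · intro v hv
    rcases eq_or_ne v u with rfl | hvu
    · refine iff_of_true hwu ⟨?_, le_rfl, by omega⟩
      rw [inter_eq_left.2 (hsub'.trans (h.P_subset_I v hv))]
      exact nonempty_Icc.2 hab'.le
    · refine iff_of_false (fun hwv => hvu (hleaf v hv hwv)) fun ⟨hmeet, hd, _⟩ => ?_
      exact hmeet.not_disjoint (hJI v hv hvu (by omega))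

end IsForestRep

theorem IsAcyclic.exists_isForestRep {F : SimpleGraph W} (hF : F.IsAcyclic) (s : Finset W) :
    ∃ I P R d, IsForestRep F s I P R d := by
  classical
  induction s using Finset.strongInduction with
  | H s ih =>
  rcases s.eq_empty_or_nonempty with rfl | hs
  · refine ⟨fun _ => ∅, fun _ => ∅, Icc 0 1, fun _ => 0, ⟨?_, ?_, ⟨0, 1, one_pos, rfl⟩, ?_, ?_, ?_, ?_⟩⟩
      <;> simp
  obtain ⟨w, hw, hleaf⟩ := hF.exists_mem_forall_adj_eq hs
  obtain ⟨I, P, R, d, h⟩ := ih _ (Finset.erase_ssubset hw)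
  rw [← Finset.insert_erase hw]
  by_cases hu : ∃ u ∈ s.erase w, F.Adj w u
  · obtain ⟨u, hu, hwu⟩ := hu
    exact h.exists_insert_of_leaf (Finset.notMem_erase w s) hu hwu fun v hv hwv =>
      hleaf v (Finset.mem_of_mem_erase hv) u (Finset.mem_of_mem_erase hu) hwv hwu
  · push Not at hu
    exact h.exists_insert_of_isolated (Finset.notMem_erase w s) hu

theorem IsAcyclic.exists_isIntervalGraph_iInf [Finite W] {F : SimpleGraph W}
    (hF : F.IsAcyclic) :
    ∃ J : Fin 2 → SimpleGraph W, (∀ b, IsIntervalGraph (J b)) ∧ F = ⨅ b, J b := by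
  have := Fintype.ofFinite W
  obtain ⟨I, _, _, d, h⟩ := hF.exists_isForestRep Finset.univ
  refine ⟨![intersectionGraph I, intersectionGraph fun v => Icc (d v : ℝ) (d v + 1)],
    Fin.forall_fin_two.2 ⟨isIntervalGraph_intersectionGraph fun v => h.I_eq_Icc v (by simp),
      isIntervalGraph_intersectionGraph fun v => ⟨_, _, by linarith, rfl⟩⟩, ?_⟩
  ext u v
  simp only [iInf_adj, Fin.forall_fin_two, Matrix.cons_val_zero, Matrix.cons_val_one,
    intersectionGraph, Icc_natCast_inter_nonempty_iff]
  by_cases huv : u = v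
  · simp [huv]
  · simp [huv, h.adj_iff u (by simp) v (by simp) huv]

end SimpleGraph

theorem localCoverLE_of_isIntervalGraph {V : Type u} {ι : Type*} [Finite ι]
    {H : SimpleGraph V} {S : ι → Set V} {J : ∀ x, SimpleGraph (S x)}
    (hJ : ∀ x, IsIntervalGraph (J x)) (hle : ∀ x, H.induce (S x) ≤ J x)
    (hcover : ∀ u v, u ≠ v → ¬H.Adj u v →
      ∃ x, ∃ (hu : u ∈ S x) (hv : v ∈ S x), ¬(J x).Adj ⟨u, hu⟩ ⟨v, hv⟩)
    {s : ℕ} (hs : ∀ v, {x | v ∈ S x}.ncard ≤ s) : LocalCoverLE H s := by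
  let G : ι → SimpleGraph V := fun x => (J x)ᶜ.map (Embedding.subtype _)
  have hsupp : ∀ x, (G x).support ⊆ S x := by
    rintro x _ ⟨_, -, u, _, -, rfl, -⟩
    exact u.2
  have hcoint : ∀ x, IsCoIntervalGraph ((G x).induce (G x).support) := fun x =>
    (hJ x).of_embedding (embeddingOfSubset _ _ (hsupp x)) fun u v huv => by
      have hGx := SimpleGraph.map_adj_apply (G := (J x)ᶜ) (f := Embedding.subtype _)
        (a := ⟨u, hsupp x u.2⟩) (b := ⟨v, hsupp x v.2⟩)
      show u ≠ v ∧ ¬(G x).Adj u v ↔ (J x).Adj ⟨u, hsupp x u.2⟩ ⟨v, hsupp x v.2⟩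
      rw [show (G x).Adj u v ↔ _ from hGx, SimpleGraph.compl_adj]
      have huv' : (⟨u, hsupp x u.2⟩ : S x) ≠ ⟨v, hsupp x v.2⟩ := by simpa [Subtype.ext_iff] using huv
      simp [huv, huv']
  let e := Finite.equivFin ι
  refine ⟨Nat.card ι, fun i => G (e.symm i), ?_, ?_, fun i => hcoint _, fun v => ?_⟩
  · rintro i _ _ ⟨huv, u, v, hJuv, rfl, rfl⟩
    exact ⟨huv, fun hH => hJuv.2 (hle _ hH)⟩
  · rintro u v ⟨huv, hH⟩
    obtain ⟨x, hu, hv, hJuv⟩ := hcover u v huv hH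
    refine ⟨e x, ?_⟩
    show (G (e.symm (e x))).Adj u v
    rw [e.symm_apply_apply]
    exact ⟨huv, ⟨u, hu⟩, ⟨v, hv⟩, ⟨fun h => huv (congrArg Subtype.val h), hJuv⟩, rfl, rfl⟩
  · calc {i | v ∈ (G (e.symm i)).support}.ncard
        = {x | v ∈ (G x).support}.ncard :=
          Set.ncard_preimage_of_injective_subset_range (s := {x | v ∈ (G x).support})
            e.symm.injective (by simp)
      _ ≤ {x | v ∈ S x}.ncard := Set.ncard_le_ncard (fun x hx => hsupp x hx) (Set.toFinite _)
      _ ≤ s := hs v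

theorem stmt_17_general {V : Type} [Fintype V] (H : SimpleGraph V) (k : ℕ) (hk : 2 ≤ k)
    (c : V → Fin k)
    (hacyclic : ∀ i j : Fin k, (H.induce {v | c v = i ∨ c v = j}).IsAcyclic) :
    localBoxicity H ≤ 2 * (k - 1) := by
  have : Nontrivial (Fin k) := Fin.nontrivial_iff_two_le.2 hk
  let E := (⊤ : SimpleGraph (Fin k)).edgeSet
  have hforest : ∀ e : Sym2 (Fin k), (H.induce {v | c v ∈ e}).IsAcyclic := by
    intro e
    induction e using Sym2.ind with
    | h i j =>
      rw [show {v | c v ∈ s(i, j)} = {v | c v = i ∨ c v = j} by ext; simp]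
      exact hacyclic i j
  choose J hJ hFJ using fun e : E => (hforest e).exists_isIntervalGraph_iInf
  refine Nat.sInf_le (localCoverLE_of_isIntervalGraph (ι := Fin 2 × E)
    (J := fun x => J x.2 x.1) (fun x => hJ _ _) (fun x => hFJ x.2 ▸ iInf_le _ x.1) ?_ fun v => ?_)
  · intro u v huv hH
    obtain ⟨e, he, hu, hv⟩ := SimpleGraph.exists_mem_edgeSet_top (c u) (c v)
    have hF : ¬(⨅ b, J ⟨e, he⟩ b).Adj ⟨u, hu⟩ ⟨v, hv⟩ := hFJ ⟨e, he⟩ ▸ hH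
    obtain ⟨b, hb⟩ : ∃ b, ¬(J ⟨e, he⟩ b).Adj ⟨u, hu⟩ ⟨v, hv⟩ := by
      by_contra! h
      exact hF (SimpleGraph.iInf_adj.2 ⟨h, by simpa using huv⟩)
    exact ⟨(b, ⟨e, he⟩), hu, hv, hb⟩
  · apply le_of_eq
    calc {x : Fin 2 × E | c v ∈ (x.2 : Sym2 (Fin k))}.ncard
        = (Set.univ ×ˢ {e : E | c v ∈ (e : Sym2 (Fin k))}).ncard := by
          congr 1; ext; simp
      _ = 2 * (k - 1) := by
          rw [Set.ncard_prod, SimpleGraph.ncard_setOf_mem_edgeSet_top]; simp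

/-- If a finite graph `H` has an acyclic coloring with `k ≥ 2` colors
(a proper coloring in which the union of any two color classes induces a forest), then
`box_ℓ(H) ≤ 2(k-1)`. -/
theorem stmt_17 {V : Type} [Fintype V] (H : SimpleGraph V) (k : ℕ) (hk : 2 ≤ k)
    (c : V → Fin k)
    (hproper : ∀ u v : V, H.Adj u v → c u ≠ c v)
    (hacyclic : ∀ i j : Fin k, (H.induce {v | c v = i ∨ c v = j}).IsAcyclic) :
    localBoxicity H ≤ 2 * (k - 1) :=
  stmt_17_general H k hk c hacyclic
end

section
/- Every co-interval graph in which every cycle has length at least 6 is acyclic; that is, if G is a co-interval graph containing no cycle of length 3, 4, or 5, then G contains no cycle at all (G is a forest). -/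
/-!
An interval graph contains no induced 4-cycle: if two disjoint intervals both meet two further
intervals, those two meet as well. Dually a co-interval graph contains no induced pair of
independent edges. When a graph has no cycle of length at most 5, every path of length 4 is
induced, so its first and last edges form such a pair; and a cycle of length at least 6 would
contain a path of length 4.
-/

open SimpleGraph

theorem Set.OrdConnected.inter_nonempty_of_forall_inter_nonempty {α : Type*} [LinearOrder α]
    {A B C D : Set α} (hA : A.OrdConnected) (hB : B.OrdConnected) (hC : C.OrdConnected)
    (hD : D.OrdConnected) (hAB : Disjoint A B) (hAC : (A ∩ C).Nonempty) (hAD : (A ∩ D).Nonempty)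
    (hBC : (B ∩ C).Nonempty) (hBD : (B ∩ D).Nonempty) : (C ∩ D).Nonempty := by
  obtain ⟨a, haA, haC⟩ := hAC
  obtain ⟨a', haA', haD⟩ := hAD
  obtain ⟨b, hbB, hbC⟩ := hBC
  obtain ⟨b', hbB', hbD⟩ := hBD
  wlog hab : a ≤ b generalizing A B a a' b b'
  · exact this hB hA hAB.symm b hbB hbC b' hbB' hbD a haA haC a' haA' haD (le_of_not_ge hab)
  rcases lt_or_ge b a' with hba' | ha'b
  · exact absurd (hA.out haA haA' ⟨hab, hba'.le⟩) (hAB.notMem_of_mem_right hbB)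
  rcases lt_or_ge b' a with hb'a | hab'
  · exact absurd (hB.out hbB' hbB ⟨hb'a.le, hab⟩) (hAB.notMem_of_mem_left haA)
  refine ⟨max a (min a' b'), hC.uIcc_subset haC hbC ?_, hD.uIcc_subset haD hbD ?_⟩
  · rw [Set.mem_uIcc]
    exact .inl ⟨le_max_left _ _, max_le hab (min_le_left _ _ |>.trans ha'b)⟩
  · rw [Set.uIcc, Set.mem_Icc]
    exact ⟨le_max_right _ _, max_le (hab'.trans (le_max_right _ _)) min_le_max⟩

theorem IsIntervalGraph.adj_or_adj_of_four_cycle {V : Type*} {H : SimpleGraph V}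
    (hH : IsIntervalGraph H)
    {a b c d : V} (hab : a ≠ b) (hcd : c ≠ d) (hac : H.Adj a c) (had : H.Adj a d)
    (hbc : H.Adj b c) (hbd : H.Adj b d) : H.Adj a b ∨ H.Adj c d := by
  obtain ⟨I, hI, hadj⟩ := hH
  have hconn (v : V) : (I v).OrdConnected := by
    obtain ⟨_, _, -, h⟩ := hI v
    exact h ▸ Set.ordConnected_Icc
  by_contra! h
  refine h.2 ((hadj c d hcd).2 (Set.OrdConnected.inter_nonempty_of_forall_inter_nonempty
    (hconn a) (hconn b) (hconn c) (hconn d) ?_ ((hadj a c hac.ne).1 hac) ((hadj a d had.ne).1 had)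
    ((hadj b c hbc.ne).1 hbc) ((hadj b d hbd.ne).1 hbd)))
  exact Set.disjoint_iff_inter_eq_empty.2
    (Set.not_nonempty_iff_eq_empty.1 (mt (hadj a b hab).2 h.1))

theorem IsCoIntervalGraph.adj_between_of_adj_of_adj {V : Type*} {G : SimpleGraph V}
    (hG : IsCoIntervalGraph G) {a b c d : V} (hab : G.Adj a b) (hcd : G.Adj c d) :
    G.Adj a c ∨ G.Adj a d ∨ G.Adj b c ∨ G.Adj b d := by
  by_contra! h
  obtain ⟨hac, had, hbc, hbd⟩ := h
  have hne {x y z : V} (hxy : G.Adj x y) (hyz : ¬ G.Adj y z) : x ≠ z := by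
    rintro rfl; exact hyz hxy.symm
  refine (hG.adj_or_adj_of_four_cycle hab.ne hcd.ne ?_ ?_ ?_ ?_).elim (·.2 hab) (·.2 hcd) <;>
    rw [compl_adj] <;> refine ⟨?_, ‹_›⟩
  · exact hne hab hbc
  · exact hne hab hbd
  · exact hne hab.symm hac
  · exact hne hab.symm had

namespace SimpleGraph.Walk

variable {V : Type*} {G : SimpleGraph V}

theorem IsPath.length_eq_one_of_adj {u v : V} {p : G.Walk u v} (hp : p.IsPath) (h : G.Adj v u)
    (hlen : p.length + 1 < G.egirth) : p.length = 1 := by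
  by_contra hne
  have hcyc : (cons h p).IsCycle := (cons_isCycle_iff p h).2
    ⟨hp, fun he => hne (hp.length_eq_one_of_mem_edges (Sym2.eq_swap ▸ he))⟩
  exact (egirth_le_length hcyc).not_gt (by simpa using hlen)

theorem IsPath.not_adj_getVert {u v : V} {p : G.Walk u v} (hp : p.IsPath)
    (hlen : p.length + 1 < G.egirth) {i j : ℕ} (hij : i + 2 ≤ j) (hj : j ≤ p.length) :
    ¬ G.Adj (p.getVert i) (p.getVert j) := by
  intro h
  have hq : ((p.drop i).take (j - i)).IsPath := (hp.drop i).take _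
  have hend : (p.drop i).getVert (j - i) = p.getVert j := by
    rw [drop_getVert]; congr 1; omega
  have hqlen : ((p.drop i).take (j - i)).length = j - i := by
    simp only [take_length, drop_length]; omega
  have := hq.length_eq_one_of_adj (hend ▸ h.symm) (lt_of_le_of_lt (by norm_cast; omega) hlen)
  omega

end SimpleGraph.Walk

theorem IsCoIntervalGraph.length_lt_four_of_isPath {V : Type*} {G : SimpleGraph V}
    (hG : IsCoIntervalGraph G) (hgirth : 6 ≤ G.egirth) {u v : V} {p : G.Walk u v}
    (hp : p.IsPath) : p.length < 4 := by
  by_contra! hlong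
  set q := p.take 4
  have hq : q.IsPath := hp.take 4
  have hqlen : q.length = 4 := by simp only [q, Walk.take_length]; omega
  have hq_girth : q.length + 1 < G.egirth := lt_of_lt_of_le (by rw [hqlen]; decide) hgirth
  rcases hG.adj_between_of_adj_of_adj (q.adj_getVert_succ (i := 0) (by omega))
      (q.adj_getVert_succ (i := 3) (by omega)) with h | h | h | h <;>
    exact hq.not_adj_getVert hq_girth (by omega) (by omega) h

theorem stmt_19_general {V : Type*} (G : SimpleGraph V)
    (hG : IsCoIntervalGraph G)
    (hgirth : ∀ (v : V) (w : G.Walk v v), w.IsCycle →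
      w.length ≠ 3 ∧ w.length ≠ 4 ∧ w.length ≠ 5) :
    G.IsAcyclic := by
  have h6 : 6 ≤ G.egirth := le_egirth.2 fun v w hw => by
    have := hw.three_le_length
    have := hgirth v w hw
    norm_cast
    omega
  intro v w hw
  have hlen : 6 ≤ w.length := by exact_mod_cast h6.trans (egirth_le_length hw)
  have := hG.length_lt_four_of_isPath h6 hw.isPath_tail
  rw [Walk.length_tail] at this
  omega

/-- A co-interval graph with no cycle of length 3, 4 or 5 (i.e. every
cycle has length at least 6) has no cycles at all: it is a forest. -/
theorem stmt_19 {V : Type*} [Fintype V] (G : SimpleGraph V)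
    (hG : IsCoIntervalGraph G)
    (hgirth : ∀ (v : V) (w : G.Walk v v), w.IsCycle →
      w.length ≠ 3 ∧ w.length ≠ 4 ∧ w.length ≠ 5) :
    G.IsAcyclic :=
  stmt_19_general G hG hgirth
end
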